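/- arXiv:2304.11590 — 7 statements merged into one kernel-verified Lean document; each statement's English description precedes it below -/
import Mathlib

section
/- Let n ≥ 1, let λ_1,…,λ_n be pairwise distinct reals, α_1,…,α_n reals, and let y_1,…,y_n : ℝ × I → ℝ be smooth and nowhere vanishing on an open interval I with 0 ∉ I. If the y_j satisfy the system (yxx) and the system (yt) with u given by the constraint (uy), then u satisfies the Korteweg–de Vries equation ∂_t u = ∂_x³ u − 6 u ∂_x u on ℝ × I. -/
/-!
Differentiating (yxx), written as `2 y y'' = y'² - α² + 4 (u - λ) y²`, gives
`y''' = 2 u' y + 4 (u - λ) y'`. Substituted into (yt), this shows that every `y_j` solves the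
linear equation `∂_t y = ∂_x³ y - 6 u ∂_x y`, hence so does `S = y_1 + ⋯ + y_n`. Since
`u = x/(6t) + S/(3t)`, we have `u_t = S_t/(3t) - u/t`, `u_xxx = S_xxx/(3t)` and
`u_x = 1/(6t) + S_x/(3t)`, and KdV for `u` is exactly the linear equation for `S`.
-/

open Set Function

noncomputable section

/-- Partial derivative in the first (space) variable. -/
def pdx (u : ℝ → ℝ → ℝ) : ℝ → ℝ → ℝ := fun x t => deriv (fun x' => u x' t) x

/-- Partial derivative in the second (time) variable. -/
def pdt (u : ℝ → ℝ → ℝ) : ℝ → ℝ → ℝ := fun x t => deriv (fun t' => u x t') t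

/-- The constraint (uy): `u = x/(6t) + (y₁ + ⋯ + yₙ)/(3t)`. -/
def ucon (n : ℕ) (y : Fin n → ℝ → ℝ → ℝ) : ℝ → ℝ → ℝ :=
  fun x t => x / (6*t) + (∑ j, y j x t) / (3*t)

open Topology

theorem deriv_deriv_deriv_eq_of_deriv_deriv_eq {F U : ℝ → ℝ} {α lam : ℝ}
    (hF : ContDiff ℝ 2 F) (hU : Differentiable ℝ U) (hF0 : ∀ x, F x ≠ 0)
    (hFxx : ∀ x, deriv (deriv F) x
      = ((deriv F x)^2 - α^2) / (2 * F x) + 2 * (U x - lam) * F x) (x : ℝ) :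
    deriv (deriv (deriv F)) x = 2 * deriv U x * F x + 4 * (U x - lam) * deriv F x := by
  have hF' : HasDerivAt F (deriv F x) x := (hF.differentiable two_ne_zero x).hasDerivAt
  have hF'' : HasDerivAt (deriv F) (deriv (deriv F) x) x :=
    (hF.differentiable_deriv_two x).hasDerivAt
  have hFx := hF0 x
  have hrhs : HasDerivAt (fun y => ((deriv F y)^2 - α^2) / (2 * F y) + 2 * (U y - lam) * F y)
      _ x :=
    (((hF''.pow 2).sub_const (α^2)).div (hF'.const_mul 2) (mul_ne_zero two_ne_zero hFx)).add
      ((((hU x).hasDerivAt.sub_const lam).const_mul 2).mul hF')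
  rw [funext hFxx, hrhs.deriv, hFxx x, Pi.pow_apply]
  field_simp
  ring

theorem pdt_eq_of_pdx_pdx_eq {f u : ℝ → ℝ → ℝ} {α lam x t : ℝ}
    (hf : ContDiff ℝ 2 (f · t)) (hu : Differentiable ℝ (u · t)) (hf0 : ∀ x, f x t ≠ 0)
    (hxx : ∀ x, pdx (pdx f) x t
      = ((pdx f x t)^2 - α^2) / (2 * f x t) + 2 * (u x t - lam) * f x t)
    (hft : pdt f x t = 2 * pdx u x t * f x t - 2 * (u x t + 2 * lam) * pdx f x t) :
    pdt f x t = pdx (pdx (pdx f)) x t - 6 * u x t * pdx f x t := by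
  have hxxx : pdx (pdx (pdx f)) x t = 2 * pdx u x t * f x t + 4 * (u x t - lam) * pdx f x t :=
    deriv_deriv_deriv_eq_of_deriv_deriv_eq hf hu hf0 hxx x
  rw [hft, hxxx]
  ring

section Slices

variable {𝕜 E F G : Type*} [NontriviallyNormedField 𝕜]
  [NormedAddCommGroup E] [NormedSpace 𝕜 E] [NormedAddCommGroup F] [NormedSpace 𝕜 F]
  [NormedAddCommGroup G] [NormedSpace 𝕜 G]
  {f : E → F → G} {s : Set F} {k : WithTop ℕ∞} {x : E} {t : F}

theorem ContDiffOn.contDiff_left_of_univ_prod (hf : ContDiffOn 𝕜 k (uncurry f) (univ ×ˢ s))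
    (ht : t ∈ s) : ContDiff 𝕜 k (f · t) := by
  rw [← contDiffOn_univ]
  exact hf.comp (contDiff_id.prodMk contDiff_const).contDiffOn fun _ _ => ⟨trivial, ht⟩

theorem ContDiffOn.differentiableAt_right_of_univ_prod
    (hf : ContDiffOn 𝕜 k (uncurry f) (univ ×ˢ s)) (hk : k ≠ 0) (hs : s ∈ 𝓝 t) :
    DifferentiableAt 𝕜 (f x ·) t :=
  ((hf.comp (contDiff_const.prodMk contDiff_id).contDiffOn fun _ ht => ⟨trivial, ht⟩)
    |>.differentiableOn hk).differentiableAt hs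

end Slices

section Constraint

variable {n : ℕ} {y : Fin n → ℝ → ℝ → ℝ} {x t : ℝ}

theorem hasDerivAt_ucon_left (hy : ∀ j, DifferentiableAt ℝ (y j · t) x) :
    HasDerivAt (ucon n y · t) (1 / (6 * t) + (∑ j, pdx (y j) x t) / (3 * t)) x := by
  have hsum : HasDerivAt (fun x => ∑ j, y j x t) (∑ j, pdx (y j) x t) x :=
    HasDerivAt.fun_sum fun j _ => (hy j).hasDerivAt
  exact ((hasDerivAt_id' x).div_const (6 * t)).add (hsum.div_const (3 * t))

theorem pdx_ucon (hy : ∀ j, DifferentiableAt ℝ (y j · t) x) :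
    pdx (ucon n y) x t = 1 / (6 * t) + (∑ j, pdx (y j) x t) / (3 * t) :=
  (hasDerivAt_ucon_left hy).deriv

theorem pdx_pdx_pdx_ucon (hy : ∀ j, ContDiff ℝ 3 (y j · t)) :
    pdx (pdx (pdx (ucon n y))) x t = (∑ j, pdx (pdx (pdx (y j))) x t) / (3 * t) := by
  have hd : ∀ j, ContDiff ℝ 2 (pdx (y j) · t) := fun j => (hy j).deriv'
  have h1 : (pdx (ucon n y) · t) = fun x => 1 / (6 * t) + (∑ j, pdx (y j) x t) / (3 * t) :=
    funext fun x => pdx_ucon fun j => (hy j).differentiable (by norm_num) x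
  have h2 : (pdx (pdx (ucon n y)) · t) = fun x => (∑ j, pdx (pdx (y j)) x t) / (3 * t) := by
    funext x
    change deriv (pdx (ucon n y) · t) x = _
    rw [h1, deriv_const_add, deriv_div_const,
      deriv_fun_sum fun j _ => (hd j).differentiable two_ne_zero x]
    rfl
  change deriv (pdx (pdx (ucon n y)) · t) x = _
  rw [h2, deriv_div_const]
  congr 1
  exact (HasDerivAt.fun_sum fun j _ => ((hd j).differentiable_deriv_two x).hasDerivAt).deriv

theorem pdt_ucon (ht : t ≠ 0) (hy : ∀ j, DifferentiableAt ℝ (y j x ·) t) :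
    pdt (ucon n y) x t = (∑ j, pdt (y j) x t) / (3 * t) - ucon n y x t / t := by
  have hsum : HasDerivAt (fun t => ∑ j, y j x t) (∑ j, pdt (y j) x t) t :=
    HasDerivAt.fun_sum fun j _ => (hy j).hasDerivAt
  have hu : HasDerivAt (ucon n y x) _ t :=
    ((hasDerivAt_const t x).div ((hasDerivAt_id' t).const_mul 6) (by positivity)).add
      (hsum.div ((hasDerivAt_id' t).const_mul 3) (by positivity))
  rw [pdt, hu.deriv, ucon]
  field_simp
  ring

end Constraint

theorem statement0_general
    (n : ℕ)
    (lam alp : Fin n → ℝ)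
    (a b : ℝ) (I : Set ℝ) (hI : I = Set.Ioo a b) (hI0 : (0:ℝ) ∉ I)
    (y : Fin n → ℝ → ℝ → ℝ)
    (hysmooth : ∀ j, ContDiffOn ℝ (⊤ : ℕ∞) (uncurry (y j)) (univ ×ˢ I))
    (hyne : ∀ j x t, t ∈ I → y j x t ≠ 0)
    -- system (yxx)
    (hyxx : ∀ j x t, t ∈ I →
      pdx (pdx (y j)) x t
        = ((pdx (y j) x t)^2 - (alp j)^2) / (2 * y j x t)
          + 2 * (ucon n y x t - lam j) * y j x t)
    -- system (yt)
    (hyt : ∀ j x t, t ∈ I →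
      pdt (y j) x t
        = 2 * pdx (ucon n y) x t * y j x t
          - 2 * (ucon n y x t + 2 * lam j) * pdx (y j) x t) :
    -- u satisfies KdV on ℝ × I
    ∀ x t, t ∈ I →
      pdt (ucon n y) x t
        = pdx (pdx (pdx (ucon n y))) x t - 6 * ucon n y x t * pdx (ucon n y) x t := by
  intro x t ht
  have ht0 : t ≠ 0 := fun h => hI0 (h ▸ ht)
  have hyx : ∀ j, ContDiff ℝ 3 (y j · t) := fun j =>
    ((hysmooth j).contDiff_left_of_univ_prod ht).of_le (WithTop.coe_le_coe.mpr le_top)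
  have hy_t : ∀ j, DifferentiableAt ℝ (y j x ·) t := fun j =>
    (hysmooth j).differentiableAt_right_of_univ_prod (by simp)
      (hI ▸ isOpen_Ioo.mem_nhds (hI ▸ ht))
  have hyx_diff : ∀ x' j, DifferentiableAt ℝ (y j · t) x' := fun x' j =>
    (hyx j).differentiable (by norm_num) x'
  have hlin : ∀ j, pdt (y j) x t
      = pdx (pdx (pdx (y j))) x t - 6 * ucon n y x t * pdx (y j) x t := fun j =>
    pdt_eq_of_pdx_pdx_eq ((hyx j).of_le (by norm_num))
      (fun x' => (hasDerivAt_ucon_left (hyx_diff x')).differentiableAt)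
      (fun x' => hyne j x' t ht) (fun x' => hyxx j x' t ht) (hyt j x t ht)
  rw [pdt_ucon ht0 hy_t, pdx_pdx_pdx_ucon hyx, pdx_ucon (hyx_diff x),
    Finset.sum_congr rfl fun j _ => hlin j, Finset.sum_sub_distrib, ← Finset.mul_sum]
  field_simp
  ring

/-- if smooth nowhere-vanishing `y₁, …, yₙ` satisfy the systems (yxx) and (yt)
with `u` given by the constraint (uy), then `u` satisfies the KdV equation on `ℝ × I`. -/
theorem statement0
    (n : ℕ) (hn : 1 ≤ n)
    (lam alp : Fin n → ℝ) (hlam : Function.Injective lam)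
    (a b : ℝ) (I : Set ℝ) (hI : I = Set.Ioo a b) (hI0 : (0:ℝ) ∉ I)
    (y : Fin n → ℝ → ℝ → ℝ)
    (hysmooth : ∀ j, ContDiffOn ℝ (⊤ : ℕ∞) (uncurry (y j)) (univ ×ˢ I))
    (hyne : ∀ j x t, t ∈ I → y j x t ≠ 0)
    -- system (yxx)
    (hyxx : ∀ j x t, t ∈ I →
      pdx (pdx (y j)) x t
        = ((pdx (y j) x t)^2 - (alp j)^2) / (2 * y j x t)
          + 2 * (ucon n y x t - lam j) * y j x t)
    -- system (yt)
    (hyt : ∀ j x t, t ∈ I →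
      pdt (y j) x t
        = 2 * pdx (ucon n y) x t * y j x t
          - 2 * (ucon n y x t + 2 * lam j) * pdx (y j) x t) :
    -- u satisfies KdV on ℝ × I
    ∀ x t, t ∈ I →
      pdt (ucon n y) x t
        = pdx (pdx (pdx (ucon n y))) x t - 6 * ucon n y x t * pdx (ucon n y) x t :=
  statement0_general n lam alp a b I hI hI0 y hysmooth hyne hyxx hyt
end
end

section
/- Let n ≥ 1, λ_1,…,λ_n pairwise distinct reals, α_1,…,α_n reals, and y_1,…,y_n : ℝ × I → ℝ smooth and nowhere vanishing (I an open interval, 0 ∉ I) satisfying (yxx), (yt) and the constraint (uy). Then for every λ ∈ ℝ with λ ∉ {λ_1,…,λ_n}, the 2×2 matrices U = [[0,1],[u−λ,0]], V = M(−u−2λ), and W = M(−3t − (1/2) Σ_{j=1}^n y_j/(λ−λ_j)) satisfy the isomonodromy equations ∂_x W = ∂_λ U + [U,W] and ∂_t W = ∂_λ V + [V,W] at every (x,t) ∈ ℝ × I. -/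
/-!
With `L_μ g = g_xxx - 4 (u - μ) g_x - 2 u_x g` and `T_μ g = g_t - 2 u_x g + 2 (u + 2μ) g_x`,
the equation `∂ₓ M(g) = ∂_λ U + [U, M(g)]` says exactly `L_λ g = 1`, and
`∂ₜ M(g) = ∂_λ V + [V, M(g)]` follows from `L_λ g = 1`, `T_λ g = -2` and the KdV equation
`u_t = u_xxx - 6 u u_x`.

Differentiating (yxx) gives `L_{λⱼ} yⱼ = 0`, and (yt) is `T_{λⱼ} yⱼ = 0`. Since
`L_λ - L_μ = T_λ - T_μ = 4 (λ - μ) ∂ₓ`, the function `g = -3t - ½ Σ yⱼ / (λ - λⱼ)` has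
`L_λ g = 6t u_x - 2 Σ ∂ₓyⱼ` and `T_λ g = -3 + 6t u_x - 2 Σ ∂ₓyⱼ`, which are `1` and `-2` by (uy).
Finally `T_μ - L_μ = ∂ₜ - ∂ₓ³ + 6u ∂ₓ` does not depend on `μ`, so every `yⱼ` solves
`∂ₜ y = ∂ₓ³ y - 6u ∂ₓ y`; summing and using (uy) once more gives KdV for `u`.
-/

open Set Function

noncomputable section

/-- The matrix `M(g) = [[−g_x, 2g], [2(u−λ)g − g_xx, g_x]]`. -/
def Mmat (u g : ℝ → ℝ → ℝ) (l : ℝ) (x t : ℝ) : Matrix (Fin 2) (Fin 2) ℝ :=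
  !![-(pdx g x t), 2 * g x t;
     2 * (u x t - l) * g x t - pdx (pdx g) x t, pdx g x t]

/-- Entrywise partial derivative of a matrix-valued function in the first variable. -/
def pdxM (A : ℝ → ℝ → Matrix (Fin 2) (Fin 2) ℝ) (x t : ℝ) : Matrix (Fin 2) (Fin 2) ℝ :=
  Matrix.of fun i j => deriv (fun x' => A x' t i j) x

/-- Entrywise partial derivative of a matrix-valued function in the second variable. -/
def pdtM (A : ℝ → ℝ → Matrix (Fin 2) (Fin 2) ℝ) (x t : ℝ) : Matrix (Fin 2) (Fin 2) ℝ :=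
  Matrix.of fun i j => deriv (fun t' => A x t' i j) t

/-- Entrywise derivative in the spectral parameter λ. -/
def pdl (A : ℝ → Matrix (Fin 2) (Fin 2) ℝ) (l : ℝ) : Matrix (Fin 2) (Fin 2) ℝ :=
  Matrix.of fun i j => deriv (fun l' => A l' i j) l

namespace Isomonodromy

open Filter Topology

def StripSmooth (I : Set ℝ) (f : ℝ → ℝ → ℝ) : Prop :=
  ContDiffOn ℝ (⊤ : ℕ∞) (uncurry f) (univ ×ˢ I)

variable {I : Set ℝ} {f : ℝ → ℝ → ℝ} {x t : ℝ}

theorem strip_mem_nhds (hI : IsOpen I) (ht : t ∈ I) : univ ×ˢ I ∈ 𝓝 (x, t) :=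
  (isOpen_univ.prod hI).mem_nhds ⟨mem_univ x, ht⟩

theorem StripSmooth.contDiffAt (hf : StripSmooth I f) (hI : IsOpen I) (ht : t ∈ I) :
    ContDiffAt ℝ (⊤ : ℕ∞) (uncurry f) (x, t) :=
  ContDiffOn.contDiffAt hf (strip_mem_nhds hI ht)

theorem StripSmooth.differentiableAt (hf : StripSmooth I f) (hI : IsOpen I) (ht : t ∈ I) :
    DifferentiableAt ℝ (uncurry f) (x, t) :=
  (hf.contDiffAt hI ht).differentiableAt (by simp)

theorem StripSmooth.contDiff_slice (hf : StripSmooth I f) (ht : t ∈ I) :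
    ContDiff ℝ (⊤ : ℕ∞) (fun x => f x t) :=
  hf.comp_contDiff (contDiff_id.prodMk contDiff_const) fun x => ⟨mem_univ x, ht⟩

theorem StripSmooth.hasDerivAt_pdx (hf : StripSmooth I f) (ht : t ∈ I) :
    HasDerivAt (fun x' => f x' t) (pdx f x t) x :=
  ((hf.contDiff_slice ht).differentiable (by simp)).differentiableAt.hasDerivAt

theorem pdx_eq_fderiv (hf : DifferentiableAt ℝ (uncurry f) (x, t)) :
    pdx f x t = fderiv ℝ (uncurry f) (x, t) (1, 0) := by
  have h : HasDerivAt (uncurry f ∘ fun x' => (x', t)) (fderiv ℝ (uncurry f) (x, t) (1, 0)) x :=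
    hf.hasFDerivAt.comp_hasDerivAt x ((hasDerivAt_id' x).prodMk (hasDerivAt_const x t))
  exact h.deriv

theorem pdt_eq_fderiv (hf : DifferentiableAt ℝ (uncurry f) (x, t)) :
    pdt f x t = fderiv ℝ (uncurry f) (x, t) (0, 1) := by
  have h : HasDerivAt (uncurry f ∘ fun t' => (x, t')) (fderiv ℝ (uncurry f) (x, t) (0, 1)) t :=
    hf.hasFDerivAt.comp_hasDerivAt t ((hasDerivAt_const t x).prodMk (hasDerivAt_id' t))
  exact h.deriv

theorem StripSmooth.hasDerivAt_pdt (hf : StripSmooth I f) (hI : IsOpen I) (ht : t ∈ I) :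
    HasDerivAt (fun t' => f x t') (pdt f x t) t :=
  ((hf.differentiableAt hI ht).comp t
    ((differentiableAt_const x).prodMk differentiableAt_id)).hasDerivAt

theorem StripSmooth.fderiv_apply (hf : StripSmooth I f) (hI : IsOpen I) (v : ℝ × ℝ) :
    StripSmooth I fun x t => fderiv ℝ (uncurry f) (x, t) v :=
  (hf.fderiv_of_isOpen (isOpen_univ.prod hI) (by simp)).clm_apply contDiffOn_const

theorem StripSmooth.stripSmooth_pdx (hf : StripSmooth I f) (hI : IsOpen I) :
    StripSmooth I (pdx f) :=
  (hf.fderiv_apply hI (1, 0)).congr fun _ hp => pdx_eq_fderiv (hf.differentiableAt hI hp.2)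

theorem StripSmooth.stripSmooth_pdt (hf : StripSmooth I f) (hI : IsOpen I) :
    StripSmooth I (pdt f) :=
  (hf.fderiv_apply hI (0, 1)).congr fun _ hp => pdt_eq_fderiv (hf.differentiableAt hI hp.2)

theorem StripSmooth.fderiv_fderiv_apply (hf : StripSmooth I f) (hI : IsOpen I) (ht : t ∈ I)
    (v w : ℝ × ℝ) :
    fderiv ℝ (fun p => fderiv ℝ (uncurry f) p v) (x, t) w
      = fderiv ℝ (fderiv ℝ (uncurry f)) (x, t) w v := by
  have hD : HasFDerivAt (fderiv ℝ (uncurry f)) (fderiv ℝ (fderiv ℝ (uncurry f)) (x, t)) (x, t) :=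
    (((hf.contDiffAt hI ht).fderiv_right (m := 1) (by norm_cast)).differentiableAt
      (by simp)).hasFDerivAt
  rw [(hD.clm_apply (hasFDerivAt_const v (x, t))).fderiv]
  simp

theorem StripSmooth.pdt_pdx (hf : StripSmooth I f) (hI : IsOpen I) (ht : t ∈ I) :
    pdt (pdx f) x t = pdx (pdt f) x t := by
  have hstrip := strip_mem_nhds (x := x) hI ht
  have hpdx : uncurry (pdx f) =ᶠ[𝓝 (x, t)] fun p => fderiv ℝ (uncurry f) p (1, 0) :=
    eventually_of_mem hstrip fun p hp => pdx_eq_fderiv (hf.differentiableAt hI hp.2)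
  have hpdt : uncurry (pdt f) =ᶠ[𝓝 (x, t)] fun p => fderiv ℝ (uncurry f) p (0, 1) :=
    eventually_of_mem hstrip fun p hp => pdt_eq_fderiv (hf.differentiableAt hI hp.2)
  rw [pdt_eq_fderiv ((hf.stripSmooth_pdx hI).differentiableAt hI ht),
    pdx_eq_fderiv ((hf.stripSmooth_pdt hI).differentiableAt hI ht), hpdx.fderiv_eq, hpdt.fderiv_eq,
    hf.fderiv_fderiv_apply hI ht, hf.fderiv_fderiv_apply hI ht]
  exact ((hf.contDiffAt hI ht).isSymmSndFDerivAt (by simp; norm_cast)) _ _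

theorem matrix_of_deriv_fin_two {s : ℝ} {a b c d : ℝ → ℝ} {a' b' c' d' : ℝ}
    (ha : HasDerivAt a a' s) (hb : HasDerivAt b b' s) (hc : HasDerivAt c c' s)
    (hd : HasDerivAt d d' s) :
    Matrix.of (fun i j => deriv (fun s' => !![a s', b s'; c s', d s'] i j) s)
      = !![a', b'; c', d'] := by
  ext i j
  fin_cases i <;> fin_cases j
  · exact ha.deriv
  · exact hb.deriv
  · exact hc.deriv
  · exact hd.deriv

variable {u g : ℝ → ℝ → ℝ} {l : ℝ}

theorem pdl_U (c : ℝ) : pdl (fun l' => !![0, 1; c - l', 0]) l = !![0, 0; -1, 0] :=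
  matrix_of_deriv_fin_two (hasDerivAt_const l 0) (hasDerivAt_const l 1)
    ((hasDerivAt_id' l).const_sub c) (hasDerivAt_const l 0)

theorem Mmat_neg_sub (l' : ℝ) :
    Mmat u (fun x t => -u x t - 2 * l') l' x t
      = !![pdx u x t, 2 * (-u x t - 2 * l');
          2 * (u x t - l') * (-u x t - 2 * l') + pdx (pdx u) x t, -pdx u x t] := by
  simp only [Mmat, pdx, deriv_sub_const, deriv.fun_neg, neg_neg, sub_neg_eq_add]

theorem pdl_V : pdl (fun l' => Mmat u (fun x t => -u x t - 2 * l') l' x t) l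
    = !![0, -4; 8 * l - 2 * u x t, 0] := by
  simp only [Mmat_neg_sub]
  have hl : HasDerivAt (fun l' : ℝ => -u x t - 2 * l') (-2) l := by
    simpa using ((hasDerivAt_id' l).const_mul 2).const_sub (-u x t)
  refine (matrix_of_deriv_fin_two (hasDerivAt_const l _) (hl.const_mul 2)
    ((((hasDerivAt_id' l).const_sub (u x t)).const_mul 2).mul hl |>.add_const _)
    (hasDerivAt_const l _)).trans ?_
  ext i j
  fin_cases i <;> fin_cases j <;> simp <;> ring

theorem pdxM_Mmat (hu : StripSmooth I u) (hg : StripSmooth I g) (hI : IsOpen I) (ht : t ∈ I) :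
    pdxM (Mmat u g l) x t
      = !![-pdx (pdx g) x t, 2 * pdx g x t;
          2 * pdx u x t * g x t + 2 * (u x t - l) * pdx g x t - pdx (pdx (pdx g)) x t,
          pdx (pdx g) x t] := by
  have hgx := hg.stripSmooth_pdx hI
  have h10 : HasDerivAt (fun x' => 2 * (u x' t - l) * g x' t - pdx (pdx g) x' t)
      (2 * pdx u x t * g x t + 2 * (u x t - l) * pdx g x t - pdx (pdx (pdx g)) x t) x :=
    ((((hu.hasDerivAt_pdx ht).sub_const l).const_mul 2).mul (hg.hasDerivAt_pdx ht)).sub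
      ((hgx.stripSmooth_pdx hI).hasDerivAt_pdx ht) |>.congr_deriv (by ring)
  exact matrix_of_deriv_fin_two (hgx.hasDerivAt_pdx ht).neg ((hg.hasDerivAt_pdx ht).const_mul 2)
    h10 (hgx.hasDerivAt_pdx ht)

theorem Mmat_isomonodromy_x (hu : StripSmooth I u) (hg : StripSmooth I g) (hI : IsOpen I)
    (ht : t ∈ I)
    (hL : pdx (pdx (pdx g)) x t = 4 * (u x t - l) * pdx g x t + 2 * pdx u x t * g x t + 1) :
    pdxM (Mmat u g l) x t
      = pdl (fun l' => !![0, 1; u x t - l', 0]) l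
        + (!![0, 1; u x t - l, 0] * Mmat u g l x t - Mmat u g l x t * !![0, 1; u x t - l, 0]) := by
  rw [pdxM_Mmat hu hg hI ht, pdl_U]
  ext i j
  fin_cases i <;> fin_cases j <;> simp [Mmat]
  · ring
  · ring
  · linear_combination -hL
  · ring

theorem pdtM_Mmat (hu : StripSmooth I u) (hg : StripSmooth I g) (hI : IsOpen I) (ht : t ∈ I) :
    pdtM (Mmat u g l) x t
      = !![-pdt (pdx g) x t, 2 * pdt g x t;
          2 * pdt u x t * g x t + 2 * (u x t - l) * pdt g x t - pdt (pdx (pdx g)) x t,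
          pdt (pdx g) x t] := by
  have hgx := hg.stripSmooth_pdx hI
  have h10 : HasDerivAt (fun t' => 2 * (u x t' - l) * g x t' - pdx (pdx g) x t')
      (2 * pdt u x t * g x t + 2 * (u x t - l) * pdt g x t - pdt (pdx (pdx g)) x t) t :=
    ((((hu.hasDerivAt_pdt hI ht).sub_const l).const_mul 2).mul
      (hg.hasDerivAt_pdt hI ht)).sub ((hgx.stripSmooth_pdx hI).hasDerivAt_pdt hI ht)
      |>.congr_deriv (by ring)
  exact matrix_of_deriv_fin_two (hgx.hasDerivAt_pdt hI ht).neg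
    ((hg.hasDerivAt_pdt hI ht).const_mul 2) h10 (hgx.hasDerivAt_pdt hI ht)

theorem Mmat_isomonodromy_t (hu : StripSmooth I u) (hg : StripSmooth I g) (hI : IsOpen I)
    (ht : t ∈ I)
    (hL : pdx (pdx (pdx g)) x t = 4 * (u x t - l) * pdx g x t + 2 * pdx u x t * g x t + 1)
    (hT : ∀ x', pdt g x' t = -2 + 2 * pdx u x' t * g x' t - 2 * (u x' t + 2 * l) * pdx g x' t)
    (hK : pdt u x t = pdx (pdx (pdx u)) x t - 6 * u x t * pdx u x t) :
    pdtM (Mmat u g l) x t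
      = pdl (fun l' => Mmat u (fun x t => -u x t - 2 * l') l' x t) l
        + (Mmat u (fun x t => -u x t - 2 * l) l x t * Mmat u g l x t
          - Mmat u g l x t * Mmat u (fun x t => -u x t - 2 * l) l x t) := by
  have hux := hu.stripSmooth_pdx hI
  have hgx := hg.stripSmooth_pdx hI
  have hTx : ∀ x', pdx (pdt g) x' t
      = 2 * pdx (pdx u) x' t * g x' t - 2 * (u x' t + 2 * l) * pdx (pdx g) x' t := by
    intro x'
    change deriv (fun x' => pdt g x' t) x' = _
    rw [funext hT]
    have h := ((((hux.hasDerivAt_pdx (x := x') ht).const_mul 2).mul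
      (hg.hasDerivAt_pdx ht)).const_add (-2)).sub
      ((((hu.hasDerivAt_pdx ht).add_const (2 * l)).const_mul 2).mul (hgx.hasDerivAt_pdx ht))
    exact h.deriv.trans (by ring)
  have hTxx : pdx (pdx (pdt g)) x t
      = 2 * pdx (pdx (pdx u)) x t * g x t + 2 * pdx (pdx u) x t * pdx g x t
        - 2 * pdx u x t * pdx (pdx g) x t - 2 * (u x t + 2 * l) * pdx (pdx (pdx g)) x t := by
    change deriv (fun x' => pdx (pdt g) x' t) x = _
    rw [funext hTx]
    have h := ((((hux.stripSmooth_pdx hI).hasDerivAt_pdx (x := x) ht).const_mul 2).mul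
      (hg.hasDerivAt_pdx ht)).sub ((((hu.hasDerivAt_pdx ht).add_const (2 * l)).const_mul 2).mul
        ((hgx.stripSmooth_pdx hI).hasDerivAt_pdx ht))
    exact h.deriv.trans (by ring)
  have hgxt : pdt (pdx g) x t = pdx (pdt g) x t := hg.pdt_pdx hI ht
  have hgxxt : pdt (pdx (pdx g)) x t = pdx (pdx (pdt g)) x t := by
    rw [hgx.pdt_pdx hI ht]
    exact congrArg (deriv · x) (funext fun x' => hg.pdt_pdx hI ht)
  rw [pdtM_Mmat hu hg hI ht, pdl_V, hgxt, hgxxt, hTx x, hTxx, hT x, hK, Mmat_neg_sub]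
  ext i j
  fin_cases i <;> fin_cases j <;> simp [Mmat]
  · ring
  · ring
  · linear_combination 2 * (u x t + 2 * l) * hL
  · ring

theorem pdx_pdx_pdx_of_yxx {y : ℝ → ℝ → ℝ} {α μ : ℝ} (hy : StripSmooth I y)
    (hu : StripSmooth I u) (hI : IsOpen I) (ht : t ∈ I) (hy0 : y x t ≠ 0)
    (hyxx : ∀ x', pdx (pdx y) x' t
      = ((pdx y x' t) ^ 2 - α ^ 2) / (2 * y x' t) + 2 * (u x' t - μ) * y x' t) :
    pdx (pdx (pdx y)) x t = 4 * (u x t - μ) * pdx y x t + 2 * pdx u x t * y x t := by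
  change deriv (fun x' => pdx (pdx y) x' t) x = _
  rw [funext hyxx]
  have hyx := (hy.stripSmooth_pdx hI).hasDerivAt_pdx (x := x) ht
  have h := (((hyx.fun_pow 2).sub_const (α ^ 2)).div ((hy.hasDerivAt_pdx ht).const_mul 2)
    (mul_ne_zero two_ne_zero hy0)).add
    ((((hu.hasDerivAt_pdx ht).sub_const μ).const_mul 2).mul (hy.hasDerivAt_pdx ht))
  refine h.deriv.trans ?_
  rw [hyxx x]
  field_simp
  ring

variable {n : ℕ} {lam : Fin n → ℝ} {y : Fin n → ℝ → ℝ → ℝ}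

def wgen (lam : Fin n → ℝ) (y : Fin n → ℝ → ℝ → ℝ) (l : ℝ) : ℝ → ℝ → ℝ :=
  fun x t => -3 * t - (1 / 2) * ∑ j, y j x t / (l - lam j)

theorem stripSmooth_ucon (hy : ∀ j, StripSmooth I (y j)) (hI0 : (0 : ℝ) ∉ I) :
    StripSmooth I (ucon n y) := by
  have h6t : ∀ c : ℝ, c ≠ 0 → ∀ p ∈ univ ×ˢ I, c * (p : ℝ × ℝ).2 ≠ 0 := fun c hc p hp =>
    mul_ne_zero hc fun h => hI0 (h ▸ hp.2)
  exact (contDiffOn_fst.div (contDiffOn_const.mul contDiffOn_snd) (h6t 6 (by norm_num))).add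
    ((ContDiffOn.sum fun j _ => hy j).div (contDiffOn_const.mul contDiffOn_snd)
      (h6t 3 (by norm_num)))

theorem stripSmooth_wgen (hy : ∀ j, StripSmooth I (y j)) : StripSmooth I (wgen lam y l) :=
  (contDiffOn_const.mul contDiffOn_snd).sub
    (contDiffOn_const.mul (ContDiffOn.sum fun j _ => (hy j).div_const _))

theorem pdx_ucon (hy : ∀ j, StripSmooth I (y j)) (ht : t ∈ I) :
    pdx (ucon n y) x t = (1 + 2 * ∑ j, pdx (y j) x t) / (6 * t) := by
  have h := ((hasDerivAt_id' x).div_const (6 * t)).add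
    ((HasDerivAt.fun_sum (u := .univ) fun j _ => (hy j).hasDerivAt_pdx (x := x) ht).div_const
      (3 * t))
  exact h.deriv.trans (by ring)

theorem six_mul_pdx_ucon (hy : ∀ j, StripSmooth I (y j)) (ht : t ∈ I) (ht0 : t ≠ 0) :
    6 * t * pdx (ucon n y) x t = 1 + 2 * ∑ j, pdx (y j) x t := by
  rw [pdx_ucon hy ht]
  field_simp

theorem pdx_pdx_pdx_ucon (hy : ∀ j, StripSmooth I (y j)) (hI : IsOpen I) (ht : t ∈ I) :
    pdx (pdx (pdx (ucon n y))) x t = (∑ j, pdx (pdx (pdx (y j))) x t) / (3 * t) := by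
  have huxx : ∀ x', pdx (pdx (ucon n y)) x' t = (∑ j, pdx (pdx (y j)) x' t) / (3 * t) := by
    intro x'
    change deriv (fun x' => pdx (ucon n y) x' t) x' = _
    rw [funext fun x' => pdx_ucon hy ht]
    have h := (((HasDerivAt.fun_sum (u := .univ) fun j _ =>
      ((hy j).stripSmooth_pdx hI).hasDerivAt_pdx (x := x') ht).const_mul 2).const_add 1).div_const
      (6 * t)
    exact h.deriv.trans (by ring)
  change deriv (fun x' => pdx (pdx (ucon n y)) x' t) x = _
  rw [funext huxx]
  exact ((HasDerivAt.fun_sum (u := .univ) fun j _ =>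
    (((hy j).stripSmooth_pdx hI).stripSmooth_pdx hI).hasDerivAt_pdx ht).div_const (3 * t)).deriv

theorem pdt_ucon (hy : ∀ j, StripSmooth I (y j)) (hI : IsOpen I) (ht : t ∈ I) (ht0 : t ≠ 0) :
    pdt (ucon n y) x t = -ucon n y x t / t + (∑ j, pdt (y j) x t) / (3 * t) := by
  have h := ((hasDerivAt_const t x).div ((hasDerivAt_id' t).const_mul 6) (by positivity)).add
    ((HasDerivAt.fun_sum (u := .univ) fun j _ => (hy j).hasDerivAt_pdt (x := x) hI ht).div
      ((hasDerivAt_id' t).const_mul 3) (by positivity))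
  refine h.deriv.trans ?_
  rw [ucon]
  field_simp
  ring

theorem pdx_wgen_eq_sum (hy : ∀ j, StripSmooth I (y j)) (ht : t ∈ I) :
    pdx (wgen lam y l) x t = -(1 / 2) * ∑ j, pdx (y j) x t / (l - lam j) := by
  have h := ((HasDerivAt.fun_sum (u := .univ) fun j _ =>
    ((hy j).hasDerivAt_pdx (x := x) ht).div_const (l - lam j)).const_mul (1 / 2)).const_sub (-3 * t)
  exact h.deriv.trans (by ring)

theorem pdx_pdx_pdx_wgen_eq_sum (hy : ∀ j, StripSmooth I (y j)) (hI : IsOpen I) (ht : t ∈ I) :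
    pdx (pdx (pdx (wgen lam y l))) x t
      = -(1 / 2) * ∑ j, pdx (pdx (pdx (y j))) x t / (l - lam j) := by
  have hGxx : ∀ x', pdx (pdx (wgen lam y l)) x' t
      = -(1 / 2) * ∑ j, pdx (pdx (y j)) x' t / (l - lam j) := by
    intro x'
    change deriv (fun x' => pdx (wgen lam y l) x' t) x' = _
    rw [funext fun x' => pdx_wgen_eq_sum hy ht]
    exact ((HasDerivAt.fun_sum (u := .univ) fun j _ => (((hy j).stripSmooth_pdx hI).hasDerivAt_pdx
      (x := x') ht).div_const (l - lam j)).const_mul _).deriv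
  change deriv (fun x' => pdx (pdx (wgen lam y l)) x' t) x = _
  rw [funext hGxx]
  exact ((HasDerivAt.fun_sum (u := .univ) fun j _ => ((((hy j).stripSmooth_pdx hI).stripSmooth_pdx
    hI).hasDerivAt_pdx ht).div_const (l - lam j)).const_mul _).deriv

theorem pdt_wgen_eq_sum (hy : ∀ j, StripSmooth I (y j)) (hI : IsOpen I) (ht : t ∈ I) :
    pdt (wgen lam y l) x t = -3 - (1 / 2) * ∑ j, pdt (y j) x t / (l - lam j) := by
  have h := ((hasDerivAt_id' t).const_mul (-3)).sub ((HasDerivAt.fun_sum (u := .univ) fun j _ =>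
    ((hy j).hasDerivAt_pdt (x := x) hI ht).div_const (l - lam j)).const_mul (1 / 2))
  exact h.deriv.trans (by ring)

theorem pdx_pdx_pdx_wgen (hy : ∀ j, StripSmooth I (y j)) (hI : IsOpen I) (ht : t ∈ I)
    (ht0 : t ≠ 0) (hl : ∀ j, l ≠ lam j)
    (hy3 : ∀ j, pdx (pdx (pdx (y j))) x t
      = 4 * (ucon n y x t - lam j) * pdx (y j) x t + 2 * pdx (ucon n y) x t * y j x t) :
    pdx (pdx (pdx (wgen lam y l))) x t
      = 4 * (ucon n y x t - l) * pdx (wgen lam y l) x t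
        + 2 * pdx (ucon n y) x t * wgen lam y l x t + 1 := by
  have hsum : ∑ j, (pdx (pdx (pdx (y j))) x t - 4 * (ucon n y x t - l) * pdx (y j) x t
      - 2 * pdx (ucon n y) x t * y j x t) / (l - lam j) = ∑ j, 4 * pdx (y j) x t := by
    refine Finset.sum_congr rfl fun j _ => ?_
    rw [div_eq_iff (sub_ne_zero.mpr (hl j)), hy3 j]
    ring
  simp only [sub_div, Finset.sum_sub_distrib, mul_div_assoc, ← Finset.mul_sum] at hsum
  rw [pdx_pdx_pdx_wgen_eq_sum hy hI ht, pdx_wgen_eq_sum hy ht, wgen]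
  linear_combination (-1 / 2) * hsum + six_mul_pdx_ucon hy ht ht0

theorem pdt_wgen (hy : ∀ j, StripSmooth I (y j)) (hI : IsOpen I) (ht : t ∈ I)
    (ht0 : t ≠ 0) (hl : ∀ j, l ≠ lam j)
    (hyt : ∀ j, pdt (y j) x t
      = 2 * pdx (ucon n y) x t * y j x t - 2 * (ucon n y x t + 2 * lam j) * pdx (y j) x t) :
    pdt (wgen lam y l) x t
      = -2 + 2 * pdx (ucon n y) x t * wgen lam y l x t
        - 2 * (ucon n y x t + 2 * l) * pdx (wgen lam y l) x t := by
  have hsum : ∑ j, (pdt (y j) x t - 2 * pdx (ucon n y) x t * y j x t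
      + 2 * (ucon n y x t + 2 * l) * pdx (y j) x t) / (l - lam j)
      = ∑ j, 4 * pdx (y j) x t := by
    refine Finset.sum_congr rfl fun j _ => ?_
    rw [div_eq_iff (sub_ne_zero.mpr (hl j)), hyt j]
    ring
  simp only [add_div, sub_div, Finset.sum_add_distrib, Finset.sum_sub_distrib, mul_div_assoc,
    ← Finset.mul_sum] at hsum
  rw [pdt_wgen_eq_sum hy hI ht, pdx_wgen_eq_sum hy ht, wgen]
  linear_combination (-1 / 2) * hsum + six_mul_pdx_ucon hy ht ht0

theorem ucon_kdv (hy : ∀ j, StripSmooth I (y j)) (hI : IsOpen I) (ht : t ∈ I) (ht0 : t ≠ 0)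
    (hy3 : ∀ j, pdx (pdx (pdx (y j))) x t
      = 4 * (ucon n y x t - lam j) * pdx (y j) x t + 2 * pdx (ucon n y) x t * y j x t)
    (hyt : ∀ j, pdt (y j) x t
      = 2 * pdx (ucon n y) x t * y j x t - 2 * (ucon n y x t + 2 * lam j) * pdx (y j) x t) :
    pdt (ucon n y) x t
      = pdx (pdx (pdx (ucon n y))) x t - 6 * ucon n y x t * pdx (ucon n y) x t := by
  have hsum : ∑ j, pdt (y j) x t
      = ∑ j, pdx (pdx (pdx (y j))) x t - 6 * ucon n y x t * ∑ j, pdx (y j) x t := by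
    rw [Finset.mul_sum, ← Finset.sum_sub_distrib]
    refine Finset.sum_congr rfl fun j _ => ?_
    rw [hyt j, hy3 j]
    ring
  rw [pdt_ucon hy hI ht ht0, pdx_pdx_pdx_ucon hy hI ht, pdx_ucon hy ht, hsum]
  field_simp
  ring

end Isomonodromy

open Isomonodromy

theorem statement1_general
    (n : ℕ)
    (lam alp : Fin n → ℝ)
    (a b : ℝ) (I : Set ℝ) (hI : I = Set.Ioo a b) (hI0 : (0:ℝ) ∉ I)
    (y : Fin n → ℝ → ℝ → ℝ)
    (hysmooth : ∀ j, ContDiffOn ℝ (⊤ : ℕ∞) (uncurry (y j)) (univ ×ˢ I))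
    (hyne : ∀ j x t, t ∈ I → y j x t ≠ 0)
    -- system (yxx)
    (hyxx : ∀ j x t, t ∈ I →
      pdx (pdx (y j)) x t
        = ((pdx (y j) x t)^2 - (alp j)^2) / (2 * y j x t)
          + 2 * (ucon n y x t - lam j) * y j x t)
    -- system (yt)
    (hyt : ∀ j x t, t ∈ I →
      pdt (y j) x t
        = 2 * pdx (ucon n y) x t * y j x t
          - 2 * (ucon n y x t + 2 * lam j) * pdx (y j) x t)
    -- the matrices U, V = M(−u−2λ) and W = M(−3t − (1/2)Σⱼ yⱼ/(λ−λⱼ))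
    (U V W : ℝ → ℝ → ℝ → Matrix (Fin 2) (Fin 2) ℝ)
    (hU : ∀ l x t, U l x t = !![0, 1; ucon n y x t - l, 0])
    (hV : ∀ l x t, V l x t = Mmat (ucon n y) (fun x' t' => -(ucon n y x' t') - 2*l) l x t)
    (hW : ∀ l x t, W l x t
      = Mmat (ucon n y)
          (fun x' t' => -3*t' - (1/2) * ∑ j, y j x' t' / (l - lam j)) l x t) :
    ∀ l : ℝ, (∀ j, l ≠ lam j) → ∀ x t, t ∈ I →
      pdxM (W l) x t
        = pdl (fun l' => U l' x t) l + (U l x t * W l x t - W l x t * U l x t)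
      ∧ pdtM (W l) x t
        = pdl (fun l' => V l' x t) l + (V l x t * W l x t - W l x t * V l x t) := by
  intro l hl x t ht
  have hIo : IsOpen I := hI ▸ isOpen_Ioo
  have ht0 : t ≠ 0 := fun h => hI0 (h ▸ ht)
  have hu : StripSmooth I (ucon n y) := stripSmooth_ucon hysmooth hI0
  have hG : StripSmooth I (wgen lam y l) := stripSmooth_wgen hysmooth
  have hy3 : ∀ j, pdx (pdx (pdx (y j))) x t
      = 4 * (ucon n y x t - lam j) * pdx (y j) x t + 2 * pdx (ucon n y) x t * y j x t :=
    fun j => pdx_pdx_pdx_of_yxx (hysmooth j) hu hIo ht (hyne j x t ht) fun x' => hyxx j x' t ht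
  have hL := pdx_pdx_pdx_wgen hysmooth hIo ht ht0 hl hy3
  have hT := fun x' => pdt_wgen hysmooth hIo ht ht0 hl fun j => hyt j x' t ht
  have hK := ucon_kdv hysmooth hIo ht ht0 hy3 fun j => hyt j x t ht
  have hWl : W l = Mmat (ucon n y) (wgen lam y l) l := funext₂ (hW l)
  rw [hWl, funext fun l' => hU l' x t, funext fun l' => hV l' x t, hU l x t, hV l x t]
  exact ⟨Mmat_isomonodromy_x hu hG hIo ht hL, Mmat_isomonodromy_t hu hG hIo ht hL hT hK⟩

/-- solutions of (yxx), (yt), (uy) yield the isomonodromy representations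
`∂ₓW = ∂_λU + [U,W]`, `∂ₜW = ∂_λV + [V,W]` for every `λ ∉ {λ₁, …, λₙ}`. -/
theorem statement1
    (n : ℕ) (hn : 1 ≤ n)
    (lam alp : Fin n → ℝ) (hlam : Function.Injective lam)
    (a b : ℝ) (I : Set ℝ) (hI : I = Set.Ioo a b) (hI0 : (0:ℝ) ∉ I)
    (y : Fin n → ℝ → ℝ → ℝ)
    (hysmooth : ∀ j, ContDiffOn ℝ (⊤ : ℕ∞) (uncurry (y j)) (univ ×ˢ I))
    (hyne : ∀ j x t, t ∈ I → y j x t ≠ 0)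
    -- system (yxx)
    (hyxx : ∀ j x t, t ∈ I →
      pdx (pdx (y j)) x t
        = ((pdx (y j) x t)^2 - (alp j)^2) / (2 * y j x t)
          + 2 * (ucon n y x t - lam j) * y j x t)
    -- system (yt)
    (hyt : ∀ j x t, t ∈ I →
      pdt (y j) x t
        = 2 * pdx (ucon n y) x t * y j x t
          - 2 * (ucon n y x t + 2 * lam j) * pdx (y j) x t)
    -- the matrices U, V = M(−u−2λ) and W = M(−3t − (1/2)Σⱼ yⱼ/(λ−λⱼ))
    (U V W : ℝ → ℝ → ℝ → Matrix (Fin 2) (Fin 2) ℝ)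
    (hU : ∀ l x t, U l x t = !![0, 1; ucon n y x t - l, 0])
    (hV : ∀ l x t, V l x t = Mmat (ucon n y) (fun x' t' => -(ucon n y x' t') - 2*l) l x t)
    (hW : ∀ l x t, W l x t
      = Mmat (ucon n y)
          (fun x' t' => -3*t' - (1/2) * ∑ j, y j x' t' / (l - lam j)) l x t) :
    ∀ l : ℝ, (∀ j, l ≠ lam j) → ∀ x t, t ∈ I →
      pdxM (W l) x t
        = pdl (fun l' => U l' x t) l + (U l x t * W l x t - W l x t * U l x t)
      ∧ pdtM (W l) x t
        = pdl (fun l' => V l' x t) l + (V l x t * W l x t - W l x t * V l x t) :=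
  statement1_general n lam alp a b I hI hI0 y hysmooth hyne hyxx hyt U V W hU hV hW
end
end

section
/- Let n ≥ 1, κ_0 ≠ 0, and let λ_1,…,λ_n be pairwise distinct reals; set κ(λ) = κ_0 (λ−λ_1)⋯(λ−λ_n) = κ_0 λⁿ + κ_1 λ^{n−1} + ⋯ + κ_n. Let I be an open interval with 0 ∉ I, let u : ℝ × I → ℝ be smooth, and let g(λ,x,t) = Σ_{m=0}^n g_m(x,t) λ^{n−m} be polynomial in λ of degree n with smooth coefficients, normalized by g_0 = −3κ_0 t and g_1 = −(κ_0/4)(6tu − x) − 3κ_1 t. Assume that for all λ ∈ ℝ: ∂_x³ g + 4(λ − u)∂_x g − 2(∂_x u) g = κ(λ) and ∂_t g = ∂_x³ g − 6u ∂_x g − 3κ(λ). Define y_j(x,t) = −2 g(λ_j,x,t)/(κ_0 ∏_{i≠j}(λ_j−λ_i)). Then: (i) u = x/(6t) + (y_1+⋯+y_n)/(3t); (ii) ∂_t y_j = 2(∂_x u) y_j − 2(u+2λ_j)∂_x y_j; and (iii) for each j there is a constant c_j ∈ ℝ (independent of x and t) such that 2 y_j ∂_x² y_j − (∂_x y_j)²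 + 4(λ_j − u) y_j² = −c_j identically on ℝ × I. -/
/-!
At a root `λⱼ` of `κ` the right-hand sides of (gxxx) and (gt) vanish, so `yⱼ`, a constant multiple
of `g(λⱼ)`, solves the homogeneous stationary equation and `∂ₜyⱼ = ∂ₓ³yⱼ − 6u∂ₓyⱼ`; together these
give (ii). Lagrange interpolation at the nodes `λⱼ` turns `∑ⱼ g(λⱼ)/∏_{i≠j}(λⱼ−λᵢ)` into
`g₀ ∑ λᵢ + g₁`, and the normalization of `g₀, g₁` then gives `∑ⱼ yⱼ = 3tu − x/2`, which is (i).
Differentiating this identity and summing the evolution equations shows that `u` solves KdV.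
The first integral `2y∂ₓ²y − (∂ₓy)² + 4(λ−u)y²` has `x`-derivative `2y` times the stationary
equation, and, by (ii), KdV and the symmetry of mixed partials, vanishing `t`-derivative; so it is
constant on the connected set `ℝ × I`.
-/

open Set Function

noncomputable section

open scoped ContDiff

section DividedDifferences
open Polynomial Finset

variable {K : Type*} [Field K] {n : ℕ} {v : Fin n → K}

lemma sum_pow_div_prod_sub_of_lt (hv : Injective v) {k : ℕ} (hk : k < n) :
    ∑ j, v j ^ k / ∏ i ∈ univ.erase j, (v j - v i) = if k + 1 = n then 1 else 0 := by
  have h := Lagrange.coeff_eq_sum (s := univ) hv.injOn (P := X ^ k)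
    (by rw [degree_X_pow, card_univ, Fintype.card_fin]; exact_mod_cast hk)
  simp only [card_univ, Fintype.card_fin, coeff_X_pow, eval_pow, eval_X,
    show n - 1 = k ↔ k + 1 = n by omega] at h
  exact h.symm

lemma sum_pow_self_div_prod_sub (hn : 0 < n) (hv : Injective v) :
    ∑ j, v j ^ n / ∏ i ∈ univ.erase j, (v j - v i) = ∑ i, v i := by
  have hdeg :
      (X ^ n - Lagrange.nodal univ v).degree < ((univ : Finset (Fin n)).card : WithBot ℕ) := by
    simpa using degree_sub_lt_left (p := (X ^ n : K[X])) (q := Lagrange.nodal univ v)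
      (by simp [Lagrange.degree_nodal]) (pow_ne_zero _ X_ne_zero)
      (by rw [leadingCoeff_X_pow, Lagrange.nodal_monic.leadingCoeff])
  have h := Lagrange.coeff_eq_sum hv.injOn hdeg
  simp only [eval_sub, eval_pow, eval_X, Lagrange.eval_nodal_at_node (mem_univ _), sub_zero,
    card_univ, Fintype.card_fin] at h
  have hcoeff := prod_X_sub_C_coeff_card_pred univ v (by simpa using hn)
  rw [card_univ, Fintype.card_fin] at hcoeff
  rw [← h, coeff_sub, coeff_X_pow, if_neg (by omega), Lagrange.nodal, hcoeff]
  simp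

lemma sum_eval_div_prod_sub (hn : 0 < n) (hv : Injective v) (c : Fin (n + 1) → K) :
    ∑ j, (∑ m : Fin (n + 1), c m * v j ^ (n - m)) / ∏ i ∈ univ.erase j, (v j - v i)
      = c 0 * ∑ i, v i + c 1 := by
  obtain ⟨k, rfl⟩ : ∃ k, n = k + 1 := ⟨n - 1, by omega⟩
  simp_rw [sum_div, mul_div_assoc]
  rw [sum_comm]
  simp_rw [← mul_sum]
  rw [sum_eq_add_of_mem 0 1 (mem_univ _) (mem_univ _) (by simp), Fin.val_zero, Fin.val_one,
    Nat.sub_zero, sum_pow_self_div_prod_sub hn hv, sum_pow_div_prod_sub_of_lt hv (by omega),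
    if_pos (by omega), mul_one]
  rintro m - ⟨hm0, hm1⟩
  have hm : 2 ≤ (m : ℕ) := by
    rw [Ne, Fin.ext_iff, Fin.val_zero] at hm0
    rw [Ne, Fin.ext_iff, Fin.val_one] at hm1
    omega
  rw [sum_pow_div_prod_sub_of_lt hv (by omega), if_neg (by omega), mul_zero]

lemma sum_eval_div_prod_sub_of_normalized {n : ℕ} (hn : 0 < n) {lam : Fin n → ℝ}
    (hlam : Injective lam) {k0 k1 t x u : ℝ} (hk0 : k0 ≠ 0) (hk1 : k1 = -k0 * ∑ i, lam i)
    {c : Fin (n + 1) → ℝ} (hc0 : c 0 = -3 * k0 * t)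
    (hc1 : c 1 = -(k0 / 4) * (6 * t * u - x) - 3 * k1 * t) :
    ∑ j, -2 * (∑ m : Fin (n + 1), c m * lam j ^ (n - m))
        / (k0 * ∏ i ∈ univ.erase j, (lam j - lam i)) = 3 * t * u - x / 2 := by
  have hterm : ∀ a P : ℝ, -2 * a / (k0 * P) = -2 / k0 * (a / P) := fun _ _ => by ring
  rw [sum_congr rfl fun j _ => hterm _ _, ← mul_sum, sum_eval_div_prod_sub hn hlam, hc0, hc1, hk1]
  field_simp
  ring

end DividedDifferences

section PartialDerivatives
variable {E : Type*} [NormedAddCommGroup E] [NormedSpace ℝ E]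

lemma HasFDerivAt.hasDerivAt_fst_slice {F : ℝ × ℝ → E} {F' : ℝ × ℝ →L[ℝ] E} {x t : ℝ}
    (h : HasFDerivAt F F' (x, t)) : HasDerivAt (fun x' => F (x', t)) (F' (1, 0)) x :=
  h.comp_hasDerivAt x ((hasDerivAt_id x).prodMk (hasDerivAt_const x t))

lemma HasFDerivAt.hasDerivAt_snd_slice {F : ℝ × ℝ → E} {F' : ℝ × ℝ →L[ℝ] E} {x t : ℝ}
    (h : HasFDerivAt F F' (x, t)) : HasDerivAt (fun t' => F (x, t')) (F' (0, 1)) t :=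
  h.comp_hasDerivAt t ((hasDerivAt_const t x).prodMk (hasDerivAt_id t))

variable {I : Set ℝ} {f : ℝ → ℝ → ℝ} {x t : ℝ}

lemma hasDerivAt_pdx (hf : ContDiffOn ℝ ∞ (uncurry f) (univ ×ˢ I)) (ht : t ∈ I) (x : ℝ) :
    HasDerivAt (fun x' => f x' t) (pdx f x t) x := by
  have hslice : ContDiff ℝ ∞ (fun x' => f x' t) := by
    rw [← contDiffOn_univ]
    exact hf.comp (contDiff_id.prodMk contDiff_const).contDiffOn fun _ _ => ⟨mem_univ _, ht⟩
  exact (hslice.differentiable (by simp) x).hasDerivAt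

lemma hasFDerivAt_uncurry (hI : IsOpen I) (hf : ContDiffOn ℝ ∞ (uncurry f) (univ ×ˢ I))
    (ht : t ∈ I) : HasFDerivAt (uncurry f) (fderiv ℝ (uncurry f) (x, t)) (x, t) :=
  ((hf.differentiableOn (by simp)).differentiableAt
    ((isOpen_univ.prod hI).mem_nhds ⟨mem_univ x, ht⟩)).hasFDerivAt

lemma pdx_eq_fderiv (hI : IsOpen I) (hf : ContDiffOn ℝ ∞ (uncurry f) (univ ×ˢ I)) (ht : t ∈ I) :
    pdx f x t = fderiv ℝ (uncurry f) (x, t) (1, 0) :=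
  (hasFDerivAt_uncurry hI hf ht).hasDerivAt_fst_slice.deriv

lemma pdt_eq_fderiv (hI : IsOpen I) (hf : ContDiffOn ℝ ∞ (uncurry f) (univ ×ˢ I)) (ht : t ∈ I) :
    pdt f x t = fderiv ℝ (uncurry f) (x, t) (0, 1) :=
  (hasFDerivAt_uncurry hI hf ht).hasDerivAt_snd_slice.deriv

lemma hasDerivAt_pdt (hI : IsOpen I) (hf : ContDiffOn ℝ ∞ (uncurry f) (univ ×ˢ I)) (ht : t ∈ I) :
    HasDerivAt (fun t' => f x t') (pdt f x t) t :=
  (hasFDerivAt_uncurry hI hf ht).hasDerivAt_snd_slice.differentiableAt.hasDerivAt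

lemma contDiffOn_fderiv_uncurry (hI : IsOpen I) (hf : ContDiffOn ℝ ∞ (uncurry f) (univ ×ˢ I)) :
    ContDiffOn ℝ ∞ (fderiv ℝ (uncurry f)) (univ ×ˢ I) :=
  hf.fderiv_of_isOpen (m := ∞) (isOpen_univ.prod hI) le_rfl

lemma pdx_contDiffOn (hI : IsOpen I) (hf : ContDiffOn ℝ ∞ (uncurry f) (univ ×ˢ I)) :
    ContDiffOn ℝ ∞ (uncurry (pdx f)) (univ ×ˢ I) :=
  ((contDiffOn_fderiv_uncurry hI hf).clm_apply contDiffOn_const).congr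
    fun _ hp => pdx_eq_fderiv hI hf hp.2

lemma pdt_pdx (hI : IsOpen I) (hf : ContDiffOn ℝ ∞ (uncurry f) (univ ×ˢ I)) (ht : t ∈ I) :
    pdt (pdx f) x t = pdx (pdt f) x t := by
  set D := fderiv ℝ (uncurry f)
  have hU : univ ×ˢ I ∈ nhds (x, t) := (isOpen_univ.prod hI).mem_nhds ⟨mem_univ x, ht⟩
  have hD : HasFDerivAt D (fderiv ℝ D (x, t)) (x, t) :=
    (((contDiffOn_fderiv_uncurry hI hf).differentiableOn (by simp)).differentiableAt hU).hasFDerivAt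
  have hsymm : fderiv ℝ D (x, t) (0, 1) (1, 0) = fderiv ℝ D (x, t) (1, 0) (0, 1) :=
    (hf.contDiffAt hU).isSymmSndFDerivAt
      (by rw [minSmoothness_of_isRCLikeNormedField]; exact WithTop.coe_le_coe.2 le_top) _ _
  have hpdx : (fun t' => pdx f x t') =ᶠ[nhds t] fun t' => D (x, t') (1, 0) := by
    filter_upwards [hI.mem_nhds ht] with t' ht' using pdx_eq_fderiv hI hf ht'
  have hpdt : (fun x' => pdt f x' t) = fun x' => D (x', t) (0, 1) :=
    funext fun x' => pdt_eq_fderiv hI hf ht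
  have h1 := (hD.hasDerivAt_snd_slice.clm_apply (hasDerivAt_const t ((1 : ℝ), (0 : ℝ))))
  have h2 := (hD.hasDerivAt_fst_slice.clm_apply (hasDerivAt_const x ((0 : ℝ), (1 : ℝ))))
  simp only [map_zero, add_zero] at h1 h2
  change deriv (fun t' => pdx f x t') t = deriv (fun x' => pdt f x' t) x
  rw [(h1.congr_of_eventuallyEq hpdx).deriv, hpdt, h2.deriv, hsymm]

lemma hasDerivAt_pdt_pdx (hI : IsOpen I) (hf : ContDiffOn ℝ ∞ (uncurry f) (univ ×ˢ I))
    (ht : t ∈ I) : HasDerivAt (fun t' => pdx f x t') (pdx (pdt f) x t) t :=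
  pdt_pdx hI hf ht ▸ hasDerivAt_pdt hI (pdx_contDiffOn hI hf) ht

lemma hasDerivAt_pdt_pdx_pdx (hI : IsOpen I) (hf : ContDiffOn ℝ ∞ (uncurry f) (univ ×ˢ I))
    (ht : t ∈ I) : HasDerivAt (fun t' => pdx (pdx f) x t') (pdx (pdx (pdt f)) x t) t := by
  have hcomm : (fun x' => pdt (pdx f) x' t) = fun x' => pdx (pdt f) x' t :=
    funext fun _ => pdt_pdx hI hf ht
  have h := hasDerivAt_pdt_pdx hI (pdx_contDiffOn hI hf) ht (x := x)
  rwa [pdx, hcomm] at h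

lemma pdx_const_mul (c : ℝ) (f : ℝ → ℝ → ℝ) :
    pdx (fun x t => c * f x t) = fun x t => c * pdx f x t :=
  funext₂ fun _ _ => deriv_const_mul_field c

lemma pdt_const_mul (c : ℝ) (f : ℝ → ℝ → ℝ) :
    pdt (fun x t => c * f x t) = fun x t => c * pdt f x t :=
  funext₂ fun _ _ => deriv_const_mul_field c

lemma sum_pdx_eq_of_sum_eq {ι : Type*} [Fintype ι] {F : ι → ℝ → ℝ → ℝ} {a b c : ℝ}
    (hF : ∀ j x, HasDerivAt (fun x' => F j x' t) (pdx (F j) x t) x)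
    (hf : ∀ x, HasDerivAt (fun x' => f x' t) (pdx f x t) x)
    (h : ∀ x, ∑ j, F j x t = a * f x t + b * x + c) (x : ℝ) :
    ∑ j, pdx (F j) x t = a * pdx f x t + b := by
  have hsum := HasDerivAt.fun_sum (u := Finset.univ) fun j _ => hF j x
  rw [funext h] at hsum
  simpa using hsum.unique
    ((((hf x).const_mul a).add ((hasDerivAt_id x).const_mul b)).add_const c)

lemma exists_eq_const_of_hasDerivAt_zero (hI : IsOpen I) (hI' : IsPreconnected I)
    (hx : ∀ x t, t ∈ I → HasDerivAt (fun x' => f x' t) 0 x)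
    (ht : ∀ x t, t ∈ I → HasDerivAt (fun t' => f x t') 0 t) :
    ∃ c, ∀ x t, t ∈ I → f x t = c := by
  obtain ⟨c, hc⟩ := hI.exists_is_const_of_deriv_eq_zero hI'
    (fun t ht' => (ht 0 t ht').differentiableAt.differentiableWithinAt)
    (fun t ht' => (ht 0 t ht').deriv)
  refine ⟨c, fun x t ht' => ?_⟩
  rw [← hc t ht']
  exact is_const_of_deriv_eq_zero (fun x => (hx x t ht').differentiableAt)
    (fun x => (hx x t ht').deriv) x 0

end PartialDerivatives

def firstIntegral (l : ℝ) (u y : ℝ → ℝ → ℝ) : ℝ → ℝ → ℝ := fun x t =>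
  2 * y x t * pdx (pdx y) x t - pdx y x t ^ 2 + 4 * (l - u x t) * y x t ^ 2

section FirstIntegral
variable {I : Set ℝ} {u y : ℝ → ℝ → ℝ} {l t : ℝ}

lemma hasDerivAt_firstIntegral_fst (hI : IsOpen I) (hu : ContDiffOn ℝ ∞ (uncurry u) (univ ×ˢ I))
    (hy : ContDiffOn ℝ ∞ (uncurry y) (univ ×ˢ I))
    (hstat : ∀ x t, t ∈ I →
      pdx (pdx (pdx y)) x t + 4 * (l - u x t) * pdx y x t - 2 * pdx u x t * y x t = 0)
    (ht : t ∈ I) (x : ℝ) : HasDerivAt (fun x' => firstIntegral l u y x' t) 0 x := by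
  have hy' := pdx_contDiffOn hI hy
  have hy'' := pdx_contDiffOn hI hy'
  refine (((((hasDerivAt_pdx hy ht x).const_mul 2).mul (hasDerivAt_pdx hy'' ht x)).sub
    ((hasDerivAt_pdx hy' ht x).fun_pow 2)).add
    ((((hasDerivAt_pdx hu ht x).const_sub l).const_mul 4).mul
      ((hasDerivAt_pdx hy ht x).fun_pow 2))).congr_deriv ?_
  linear_combination 2 * y x t * hstat x t ht

lemma hasDerivAt_firstIntegral_snd (hI : IsOpen I) (hu : ContDiffOn ℝ ∞ (uncurry u) (univ ×ˢ I))
    (hy : ContDiffOn ℝ ∞ (uncurry y) (univ ×ˢ I))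
    (hstat : ∀ x t, t ∈ I →
      pdx (pdx (pdx y)) x t + 4 * (l - u x t) * pdx y x t - 2 * pdx u x t * y x t = 0)
    (hevol : ∀ x t, t ∈ I →
      pdt y x t = 2 * pdx u x t * y x t - 2 * (u x t + 2 * l) * pdx y x t)
    (hkdv : ∀ x t, t ∈ I → pdt u x t = pdx (pdx (pdx u)) x t - 6 * u x t * pdx u x t)
    (ht : t ∈ I) (x : ℝ) : HasDerivAt (fun t' => firstIntegral l u y x t') 0 t := by
  have hu' := pdx_contDiffOn hI hu
  have hy' := pdx_contDiffOn hI hy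
  have hyxt : ∀ x, HasDerivAt (fun x' => pdt y x' t)
      (2 * pdx (pdx u) x t * y x t - 2 * (u x t + 2 * l) * pdx (pdx y) x t) x := by
    intro x
    rw [show (fun x' => pdt y x' t) = _ from funext fun x' => hevol x' t ht]
    refine ((((hasDerivAt_pdx hu' ht x).const_mul 2).mul (hasDerivAt_pdx hy ht x)).sub
      ((((hasDerivAt_pdx hu ht x).add_const (2 * l)).const_mul 2).mul
        (hasDerivAt_pdx hy' ht x))).congr_deriv ?_
    ring
  have hyxxt : HasDerivAt (fun x' => pdx (pdt y) x' t)
      (2 * pdx (pdx (pdx u)) x t * y x t + 2 * pdx (pdx u) x t * pdx y x t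
        - 2 * pdx u x t * pdx (pdx y) x t - 2 * (u x t + 2 * l) * pdx (pdx (pdx y)) x t) x := by
    rw [show (fun x' => pdx (pdt y) x' t) = _ from funext fun x' => (hyxt x').deriv]
    refine ((((hasDerivAt_pdx (pdx_contDiffOn hI hu') ht x).const_mul 2).mul
      (hasDerivAt_pdx hy ht x)).sub
      ((((hasDerivAt_pdx hu ht x).add_const (2 * l)).const_mul 2).mul
        (hasDerivAt_pdx (pdx_contDiffOn hI hy') ht x))).congr_deriv ?_
    ring
  refine (((((hasDerivAt_pdt hI hy ht).const_mul 2).mul (hasDerivAt_pdt_pdx_pdx hI hy ht)).sub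
    ((hasDerivAt_pdt_pdx hI hy ht).fun_pow 2)).add
    ((((hasDerivAt_pdt hI hu ht).const_sub l).const_mul 4).mul
      ((hasDerivAt_pdt hI hy ht).fun_pow 2))).congr_deriv ?_
  have hyxt' : pdx (pdt y) x t = _ := (hyxt x).deriv
  have hyxxt' : pdx (pdx (pdt y)) x t = _ := hyxxt.deriv
  rw [hyxt', hyxxt']
  linear_combination (2 * pdx (pdx y) x t + 8 * (l - u x t) * y x t) * hevol x t ht
    - 4 * y x t ^ 2 * hkdv x t ht - 4 * (u x t + 2 * l) * y x t * hstat x t ht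

end FirstIntegral

lemma pdt_eq_kdv_of_sum_eq {ι : Type*} [Fintype ι] {I : Set ℝ} {u : ℝ → ℝ → ℝ}
    {y : ι → ℝ → ℝ → ℝ} {x t : ℝ} (hI : IsOpen I)
    (hu : ContDiffOn ℝ ∞ (uncurry u) (univ ×ˢ I))
    (hy : ∀ j, ContDiffOn ℝ ∞ (uncurry (y j)) (univ ×ˢ I))
    (hsum : ∀ x t, t ∈ I → ∑ j, y j x t = 3 * t * u x t - x / 2)
    (hevol : ∀ j x t, t ∈ I →
      pdt (y j) x t = pdx (pdx (pdx (y j))) x t - 6 * u x t * pdx (y j) x t)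
    (ht : t ∈ I) (ht0 : t ≠ 0) :
    pdt u x t = pdx (pdx (pdx u)) x t - 6 * u x t * pdx u x t := by
  have hu' := pdx_contDiffOn hI hu
  have hy' := fun j => pdx_contDiffOn hI (hy j)
  have hsum_x := sum_pdx_eq_of_sum_eq (fun j => hasDerivAt_pdx (hy j) ht) (hasDerivAt_pdx hu ht)
    (a := 3 * t) (b := -1 / 2) (c := 0) fun x => by rw [hsum x t ht]; ring
  have hsum_xx := sum_pdx_eq_of_sum_eq (fun j => hasDerivAt_pdx (hy' j) ht) (hasDerivAt_pdx hu' ht)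
    (a := 3 * t) (b := 0) (c := -1 / 2) fun x => by rw [hsum_x x]; ring
  have hsum_xxx := sum_pdx_eq_of_sum_eq (fun j => hasDerivAt_pdx (pdx_contDiffOn hI (hy' j)) ht)
    (hasDerivAt_pdx (pdx_contDiffOn hI hu') ht) (a := 3 * t) (b := 0) (c := 0)
    fun x => by rw [hsum_xx x]; ring
  have hsum_t : ∑ j, pdt (y j) x t = 3 * u x t + 3 * t * pdt u x t := by
    have hsum' : (fun t' => ∑ j, y j x t') =ᶠ[nhds t] fun t' => 3 * t' * u x t' - x / 2 := by
      filter_upwards [hI.mem_nhds ht] with t' ht' using hsum x t' ht'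
    refine (HasDerivAt.fun_sum fun j _ => hasDerivAt_pdt hI (hy j) ht).unique ?_
    convert ((((hasDerivAt_id t).const_mul 3).mul (hasDerivAt_pdt hI hu ht)).sub_const
      (x / 2)).congr_of_eventuallyEq hsum' using 1
    simp
  simp only [hevol _ x t ht, Finset.sum_sub_distrib, ← Finset.mul_sum, hsum_xxx, hsum_x] at hsum_t
  have hzero : 3 * t * (pdt u x t - (pdx (pdx (pdx u)) x t - 6 * u x t * pdx u x t)) = 0 := by
    linear_combination -hsum_t
  exact sub_eq_zero.1 ((mul_eq_zero.1 hzero).resolve_left (mul_ne_zero three_ne_zero ht0))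

/-- from a degree-`n` (in λ) polynomial solution `g` of the integrated stationary
equation (gxxx) and the evolution (gt), normalized by the stated `g₀`, `g₁`, the functions
`yⱼ = −2g(λⱼ)/(κ₀ ∏_{i≠j}(λⱼ−λᵢ))` recover the constraint (uy), the system (yt), and the
first integrals `2yⱼ∂ₓ²yⱼ − (∂ₓyⱼ)² + 4(λⱼ−u)yⱼ² = −cⱼ` with constants `cⱼ`. -/
theorem statement2
    (n : ℕ) (hn : 1 ≤ n)
    (k0 : ℝ) (hk0 : k0 ≠ 0)
    (lam : Fin n → ℝ) (hlam : Function.Injective lam)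
    (a b : ℝ) (I : Set ℝ) (hI : I = Set.Ioo a b) (hI0 : (0:ℝ) ∉ I)
    (u : ℝ → ℝ → ℝ) (husmooth : ContDiffOn ℝ (⊤ : ℕ∞) (uncurry u) (univ ×ˢ I))
    -- κ(λ) = κ₀(λ−λ₁)⋯(λ−λₙ), and κ₁ is its coefficient of λ^{n−1}
    (kap : ℝ → ℝ) (hkap : ∀ l, kap l = k0 * ∏ i, (l - lam i))
    (k1 : ℝ) (hk1 : k1 = -k0 * ∑ i, lam i)
    -- g(λ,x,t) = Σ_{m=0}^{n} g_m(x,t) λ^{n−m}, smooth coefficients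
    (gc : Fin (n+1) → ℝ → ℝ → ℝ)
    (hgsmooth : ∀ m, ContDiffOn ℝ (⊤ : ℕ∞) (uncurry (gc m)) (univ ×ˢ I))
    (g : ℝ → ℝ → ℝ → ℝ)
    (hg : ∀ l x t, g l x t = ∑ m : Fin (n+1), gc m x t * l ^ (n - (m : ℕ)))
    -- normalization of the first two coefficients
    (hg0 : ∀ x t, t ∈ I → gc 0 x t = -3 * k0 * t)
    (hg1 : ∀ x t, t ∈ I → gc 1 x t = -(k0/4) * (6*t*u x t - x) - 3*k1*t)
    -- the integrated stationary equation (gxxx)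
    (hgxxx : ∀ l x t, t ∈ I →
      pdx (pdx (pdx (g l))) x t + 4*(l - u x t) * pdx (g l) x t
        - 2 * pdx u x t * g l x t = kap l)
    -- the t-evolution (gt)
    (hgt : ∀ l x t, t ∈ I →
      pdt (g l) x t = pdx (pdx (pdx (g l))) x t - 6 * u x t * pdx (g l) x t - 3 * kap l)
    -- yⱼ := −2 g(λⱼ)/(κ₀ ∏_{i≠j}(λⱼ−λᵢ))
    (y : Fin n → ℝ → ℝ → ℝ)
    (hy : ∀ j x t, y j x t
      = -2 * g (lam j) x t / (k0 * ∏ i ∈ Finset.univ.erase j, (lam j - lam i))) :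
    -- (i) the constraint (uy)
    (∀ x t, t ∈ I → u x t = x/(6*t) + (∑ j, y j x t)/(3*t))
    -- (ii) the system (yt)
    ∧ (∀ j x t, t ∈ I →
        pdt (y j) x t = 2 * pdx u x t * y j x t - 2*(u x t + 2*lam j) * pdx (y j) x t)
    -- (iii) the first integrals
    ∧ (∀ j, ∃ c : ℝ, ∀ x t, t ∈ I →
        2 * y j x t * pdx (pdx (y j)) x t - (pdx (y j) x t)^2
          + 4*(lam j - u x t) * (y j x t)^2 = -c) := by
  have hIo : IsOpen I := hI ▸ isOpen_Ioo
  have hroot : ∀ j, kap (lam j) = 0 := fun j => by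
    rw [hkap, Finset.prod_eq_zero (Finset.mem_univ j) (sub_self _), mul_zero]
  set c : Fin n → ℝ := fun j => -2 / (k0 * ∏ i ∈ Finset.univ.erase j, (lam j - lam i))
  have hyc : ∀ j, y j = fun x t => c j * g (lam j) x t := fun j => by
    funext x t
    rw [hy]
    ring
  have hysm : ∀ j, ContDiffOn ℝ ∞ (uncurry (y j)) (univ ×ˢ I) := fun j => by
    rw [show uncurry (y j) = fun p => c j * ∑ m, gc m p.1 p.2 * lam j ^ (n - (m : ℕ)) from
      funext fun p => by rw [hyc, ← hg]; rfl]
    exact contDiffOn_const.mul (ContDiffOn.sum fun m _ => (hgsmooth m).mul contDiffOn_const)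
  have hstat : ∀ j x t, t ∈ I → pdx (pdx (pdx (y j))) x t + 4 * (lam j - u x t) * pdx (y j) x t
      - 2 * pdx u x t * y j x t = 0 := fun j x t ht => by
    simp only [hyc, pdx_const_mul]
    linear_combination c j * (hgxxx (lam j) x t ht).trans (hroot j)
  have hevol : ∀ j x t, t ∈ I →
      pdt (y j) x t = pdx (pdx (pdx (y j))) x t - 6 * u x t * pdx (y j) x t := fun j x t ht => by
    simp only [hyc, pdx_const_mul, pdt_const_mul]
    linear_combination c j * hgt (lam j) x t ht - 3 * c j * hroot j
  have hsum : ∀ x t, t ∈ I → ∑ j, y j x t = 3 * t * u x t - x / 2 := fun x t ht => by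
    simp only [hy, hg]
    exact sum_eval_div_prod_sub_of_normalized hn hlam hk0 hk1 (hg0 x t ht) (hg1 x t ht)
  have hyt : ∀ j x t, t ∈ I →
      pdt (y j) x t = 2 * pdx u x t * y j x t - 2 * (u x t + 2 * lam j) * pdx (y j) x t :=
    fun j x t ht => by linear_combination hevol j x t ht + hstat j x t ht
  have hkdv : ∀ x t, t ∈ I → pdt u x t = pdx (pdx (pdx u)) x t - 6 * u x t * pdx u x t :=
    fun x t ht => pdt_eq_kdv_of_sum_eq hIo husmooth hysm hsum hevol ht (ne_of_mem_of_not_mem ht hI0)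
  refine ⟨fun x t ht => ?_, hyt, fun j => ?_⟩
  · rw [hsum x t ht]
    field_simp [ne_of_mem_of_not_mem ht hI0]
    ring
  · obtain ⟨c, hc⟩ := exists_eq_const_of_hasDerivAt_zero hIo (hI ▸ isPreconnected_Ioo)
      (fun x _ ht => hasDerivAt_firstIntegral_fst hIo husmooth (hysm j) (hstat j) ht x)
      (fun x _ ht => hasDerivAt_firstIntegral_snd hIo husmooth (hysm j) (hstat j) (hyt j) hkdv ht x)
    exact ⟨-c, fun x t ht => (hc x t ht).trans (neg_neg c).symm⟩
end
end

section
/- Let u : ℝ × I → ℝ be smooth (I an open interval). For λ ∈ ℝ set U = [[0,1],[u−λ,0]] and V = M(−u−2λ) = [[∂_x u, −2u−4λ],[2(u−λ)(−u−2λ) − ∂_x² u, −∂_x u]] (note ∂_x²(−u−2λ) = −∂_x² u). Then the zero curvature equation ∂_t U = ∂_x V + [V,U] holds at every point of ℝ × I for every λ ∈ ℝ if and only if u satisfies the KdV equation ∂_t u = ∂_x³ u − 6 u ∂_x u on ℝ × I. -/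
/- For any `g`, a direct computation gives
`∂ₓM(g) + [M(g), U] = [[0, 0], [2uₓg + 4(u−λ)gₓ − gₓₓₓ, 0]]` with `U = [[0,1],[u−λ,0]]`:
the diagonal and upper entries cancel identically. For `g = −u − 2λ` the `λ`-terms cancel as
well and the lower entry becomes `uₓₓₓ − 6uuₓ`, while `∂ₜU = [[0,0],[uₜ,0]]`; so the zero
curvature equation is exactly KdV, for one `λ` or for all. -/

open Set Function

noncomputable section

lemma pdxM_of_fin_two (a b c d : ℝ → ℝ → ℝ) (x t : ℝ) :
    pdxM (fun x t => !![a x t, b x t; c x t, d x t]) x t =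
      !![pdx a x t, pdx b x t; pdx c x t, pdx d x t] := by
  ext i j
  fin_cases i <;> fin_cases j <;> rfl

lemma pdtM_of_fin_two (a b c d : ℝ → ℝ → ℝ) (x t : ℝ) :
    pdtM (fun x t => !![a x t, b x t; c x t, d x t]) x t =
      !![pdt a x t, pdt b x t; pdt c x t, pdt d x t] := by
  ext i j
  fin_cases i <;> fin_cases j <;> rfl

lemma pdx_neg (f : ℝ → ℝ → ℝ) : pdx (-f) = -pdx f := by
  funext x t
  exact deriv.fun_neg

lemma pdx_neg_sub_const (f : ℝ → ℝ → ℝ) (c : ℝ) :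
    pdx (fun x t => -f x t - c) = -pdx f := by
  funext x t
  simp only [pdx, deriv_sub_const, Pi.neg_apply]
  exact deriv.fun_neg

lemma pdxM_Mmat_add_commutator (u g : ℝ → ℝ → ℝ) (l x t : ℝ)
    (hu : DifferentiableAt ℝ (fun x' => u x' t) x)
    (hg : DifferentiableAt ℝ (fun x' => g x' t) x)
    (hg₂ : DifferentiableAt ℝ (fun x' => pdx (pdx g) x' t) x) :
    pdxM (Mmat u g l) x t
        + (Mmat u g l x t * !![0, 1; u x t - l, 0] - !![0, 1; u x t - l, 0] * Mmat u g l x t) =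
      !![0, 0; 2 * pdx u x t * g x t + 4 * (u x t - l) * pdx g x t - pdx (pdx (pdx g)) x t, 0] := by
  have hlower : pdx (fun x t => 2 * (u x t - l) * g x t - pdx (pdx g) x t) x t =
      2 * pdx u x t * g x t + 2 * (u x t - l) * pdx g x t - pdx (pdx (pdx g)) x t :=
    (((hu.hasDerivAt.sub_const l).const_mul 2).mul hg.hasDerivAt |>.sub hg₂.hasDerivAt).deriv
  have hupper : pdx (fun x t => 2 * g x t) x t = 2 * pdx g x t := by
    simp only [pdx, deriv_const_mul_field']
  have hdiag : pdx (fun x t => -pdx g x t) x t = -pdx (pdx g) x t :=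
    congrFun (congrFun (pdx_neg _) x) t
  rw [show Mmat u g l = fun x t => !![-(pdx g x t), 2 * g x t;
      2 * (u x t - l) * g x t - pdx (pdx g) x t, pdx g x t] from rfl, pdxM_of_fin_two,
    hlower, hupper, hdiag, Matrix.mul_fin_two, Matrix.mul_fin_two]
  ext i j
  fin_cases i <;> fin_cases j <;> simp <;> ring

lemma pdxM_kdv_Mmat_add_commutator (u : ℝ → ℝ → ℝ) (l x t : ℝ)
    (hu : DifferentiableAt ℝ (fun x' => u x' t) x)
    (hu₂ : DifferentiableAt ℝ (fun x' => pdx (pdx u) x' t) x) :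
    pdxM (Mmat u (fun x t => -u x t - 2 * l) l) x t
        + (Mmat u (fun x t => -u x t - 2 * l) l x t * !![0, 1; u x t - l, 0]
          - !![0, 1; u x t - l, 0] * Mmat u (fun x t => -u x t - 2 * l) l x t) =
      !![0, 0; pdx (pdx (pdx u)) x t - 6 * u x t * pdx u x t, 0] := by
  have hg := pdx_neg_sub_const u (2 * l)
  have hg₂ : DifferentiableAt ℝ (fun x' => pdx (pdx fun x t => -u x t - 2 * l) x' t) x := by
    rw [hg, pdx_neg]
    exact hu₂.neg
  rw [pdxM_Mmat_add_commutator u _ l x t hu (hu.neg.sub_const (2 * l)) hg₂, hg, pdx_neg, pdx_neg]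
  congr 4
  simp only [Pi.neg_apply]
  ring

lemma contDiff_slice_of_contDiffOn {n : WithTop ℕ∞} {u : ℝ → ℝ → ℝ} {I : Set ℝ}
    (hu : ContDiffOn ℝ n (uncurry u) (univ ×ˢ I)) {t : ℝ} (ht : t ∈ I) :
    ContDiff ℝ n (fun x => u x t) :=
  contDiffOn_univ.mp <| hu.comp (contDiff_id.prodMk contDiff_const).contDiffOn
    fun _ _ => ⟨mem_univ _, ht⟩

lemma pdtM_lax_U (u : ℝ → ℝ → ℝ) (l x t : ℝ) :
    pdtM (fun x t => !![0, 1; u x t - l, 0]) x t = !![0, 0; pdt u x t, 0] := by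
  rw [pdtM_of_fin_two (fun _ _ => 0) (fun _ _ => 1) (fun x t => u x t - l) (fun _ _ => 0)]
  simp [pdt, deriv_sub_const]

theorem statement5_general
    (I : Set ℝ)
    (u : ℝ → ℝ → ℝ)
    (hu : ContDiffOn ℝ (⊤ : ℕ∞) (uncurry u) (univ ×ˢ I))
    (U V : ℝ → ℝ → ℝ → Matrix (Fin 2) (Fin 2) ℝ)
    (hU : ∀ l x t, U l x t = !![0, 1; u x t - l, 0])
    (hV : ∀ l x t, V l x t = Mmat u (fun x' t' => -(u x' t') - 2*l) l x t) :
    (∀ l x t, t ∈ I →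
        pdtM (U l) x t = pdxM (V l) x t + (V l x t * U l x t - U l x t * V l x t))
    ↔ (∀ x t, t ∈ I →
        pdt u x t = pdx (pdx (pdx u)) x t - 6 * u x t * pdx u x t) := by
  have hUl : ∀ l, U l = fun x t => !![0, 1; u x t - l, 0] := fun l => funext₂ (hU l)
  have hVl : ∀ l, V l = Mmat u (fun x t => -u x t - 2 * l) l := fun l => funext₂ (hV l)
  have key : ∀ l x t, t ∈ I →
      pdxM (V l) x t + (V l x t * U l x t - U l x t * V l x t) =
        !![0, 0; pdx (pdx (pdx u)) x t - 6 * u x t * pdx u x t, 0] := by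
    intro l x t ht
    have hsmooth := contDiff_slice_of_contDiffOn hu ht
    rw [hUl, hVl]
    exact pdxM_kdv_Mmat_add_commutator u l x t (hsmooth.differentiable (by simp) x)
      ((hsmooth.iterate_deriv 2).differentiable (by simp) x)
  have hUt : ∀ l x t, pdtM (U l) x t = !![0, 0; pdt u x t, 0] := by
    intro l x t
    rw [hUl, pdtM_lax_U]
  constructor
  · intro h x t ht
    have h₀ := h 0 x t ht
    rw [hUt, key 0 x t ht] at h₀
    simpa using congrFun (congrFun h₀ 1) 0
  · intro h l x t ht
    rw [hUt, key l x t ht, h x t ht]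

/-- with `U = [[0,1],[u−λ,0]]` and `V = M(−u−2λ)`, the zero curvature equation
`∂ₜU = ∂ₓV + [V,U]` holds on `ℝ × I` for every `λ` iff `u` satisfies KdV on `ℝ × I`. -/
theorem statement5
    (a b : ℝ) (I : Set ℝ) (hI : I = Set.Ioo a b)
    (u : ℝ → ℝ → ℝ)
    (hu : ContDiffOn ℝ (⊤ : ℕ∞) (uncurry u) (univ ×ˢ I))
    (U V : ℝ → ℝ → ℝ → Matrix (Fin 2) (Fin 2) ℝ)
    (hU : ∀ l x t, U l x t = !![0, 1; u x t - l, 0])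
    (hV : ∀ l x t, V l x t = Mmat u (fun x' t' => -(u x' t') - 2*l) l x t) :
    (∀ l x t, t ∈ I →
        pdtM (U l) x t = pdxM (V l) x t + (V l x t * U l x t - U l x t * V l x t))
    ↔ (∀ x t, t ∈ I →
        pdt u x t = pdx (pdx (pdx u)) x t - 6 * u x t * pdx u x t) :=
  statement5_general I u hu U V hU hV
end
end

section
/- Let u, y : ℝ × J → ℝ be smooth (J an open interval, with second variable denoted τ) and μ ∈ ℝ. For λ ∈ ℝ, λ ≠ μ, set U = [[0,1],[u−λ,0]] and V = (1/(4(μ−λ))) M(y), where M(y) = [[−∂_x y, 2y],[2(u−λ)y − ∂_x² y, ∂_x y]]. Then the zero curvature equation ∂_τ U = ∂_x V + [V,U] holds at every point for every λ ≠ μ if and only if ∂_τ u = ∂_x y and ∂_x³ y − 4(u−μ) ∂_x y − 2(∂_x u) y = 0 identically. -/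
/-!
At a fixed spectral parameter `λ`, all entries of `∂ₓV + [V,U] − ∂_τU` but the lower-left one
cancel, and that one says `∂_τu = ∂ₓy − E / (4(μ−λ))`, where `E = ∂ₓ³y − 4(u−μ)∂ₓy − 2(∂ₓu)y`.
As a function of `λ` this is a constant plus a simple pole at `μ`, so it holds for every `λ ≠ μ`
exactly when both the constant term `∂_τu − ∂ₓy` and the residue `E` vanish.
-/

open Set Function

noncomputable section

theorem ContDiffOn.contDiff_comp_prodMk_const {𝕜 E F G : Type*} [NontriviallyNormedField 𝕜]
    [NormedAddCommGroup E] [NormedSpace 𝕜 E] [NormedAddCommGroup F] [NormedSpace 𝕜 F]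
    [NormedAddCommGroup G] [NormedSpace 𝕜 G] {n : WithTop ℕ∞} {f : E × F → G} {s : Set F}
    (hf : ContDiffOn 𝕜 n f (univ ×ˢ s)) {b : F} (hb : b ∈ s) :
    ContDiff 𝕜 n (fun a => f (a, b)) := by
  rw [← contDiffOn_univ]
  exact hf.comp (contDiff_id.prodMk contDiff_const).contDiffOn fun a _ => ⟨mem_univ a, hb⟩

lemma differentiableAt_pdx_pdx {y : ℝ → ℝ → ℝ} {t : ℝ} (hy : ContDiff ℝ 3 (fun z => y z t))
    (x : ℝ) : DifferentiableAt ℝ (fun z => pdx (pdx y) z t) x := by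
  have h := hy.differentiable_iteratedDeriv' 2 x
  rwa [iteratedDeriv_succ, iteratedDeriv_one] at h

def laxU (u : ℝ → ℝ → ℝ) (l x t : ℝ) : Matrix (Fin 2) (Fin 2) ℝ := !![0, 1; u x t - l, 0]

def laxV (u y : ℝ → ℝ → ℝ) (mu l x t : ℝ) : Matrix (Fin 2) (Fin 2) ℝ :=
  (1 / (4 * (mu - l))) • Mmat u y l x t

def negKdV (u y : ℝ → ℝ → ℝ) (mu x t : ℝ) : ℝ :=
  pdx (pdx (pdx y)) x t - 4 * (u x t - mu) * pdx y x t - 2 * pdx u x t * y x t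

section

variable {u y : ℝ → ℝ → ℝ} {mu l x t : ℝ}

lemma pdtM_laxU : pdtM (laxU u l) x t = !![0, 0; pdt u x t, 0] := by
  ext i j
  fin_cases i <;> fin_cases j <;> simp [pdtM, laxU, pdt, deriv_sub_const]

lemma pdxM_const_smul (c : ℝ) (A : ℝ → ℝ → Matrix (Fin 2) (Fin 2) ℝ) :
    pdxM (fun x t => c • A x t) x t = c • pdxM A x t := by
  ext i j
  simp [pdxM, deriv_const_mul_field]

lemma pdxM_Mmat (hu : DifferentiableAt ℝ (fun z => u z t) x)
    (hy : ContDiff ℝ 3 (fun z => y z t)) :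
    pdxM (Mmat u y l) x t = !![-pdx (pdx y) x t, 2 * pdx y x t;
      2 * pdx u x t * y x t + 2 * (u x t - l) * pdx y x t - pdx (pdx (pdx y)) x t,
      pdx (pdx y) x t] := by
  have hy' : DifferentiableAt ℝ (fun z => y z t) x := hy.differentiable (by norm_num) x
  have h10 : HasDerivAt (fun z => 2 * (u z t - l) * y z t - pdx (pdx y) z t)
      (2 * pdx u x t * y x t + 2 * (u x t - l) * pdx y x t - pdx (pdx (pdx y)) x t) x :=
    (((hu.hasDerivAt.sub_const l).const_mul 2).fun_mul hy'.hasDerivAt).fun_sub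
      (differentiableAt_pdx_pdx hy x).hasDerivAt
  ext i j
  fin_cases i <;> fin_cases j
  · simp [pdxM, Mmat, pdx]
  · simp [pdxM, Mmat, pdx, deriv_const_mul_field]
  · simpa [pdxM, Mmat] using h10.deriv
  · simp [pdxM, Mmat, pdx]

lemma Mmat_mul_laxU_sub :
    Mmat u y l x t * laxU u l x t - laxU u l x t * Mmat u y l x t =
      !![pdx (pdx y) x t, -(2 * pdx y x t); 2 * (u x t - l) * pdx y x t, -pdx (pdx y) x t] := by
  ext i j
  fin_cases i <;> fin_cases j <;> simp [Mmat, laxU] <;> ring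

lemma zeroCurvature_iff (hl : l ≠ mu)
    (hu : DifferentiableAt ℝ (fun z => u z t) x) (hy : ContDiff ℝ 3 (fun z => y z t)) :
    pdtM (laxU u l) x t = pdxM (laxV u y mu l) x t +
        (laxV u y mu l x t * laxU u l x t - laxU u l x t * laxV u y mu l x t) ↔
      pdt u x t = pdx y x t - negKdV u y mu x t / (4 * (mu - l)) := by
  have hml : mu - l ≠ 0 := sub_ne_zero.mpr hl.symm
  have hVx : pdxM (laxV u y mu l) x t = (1 / (4 * (mu - l))) • pdxM (Mmat u y l) x t :=
    pdxM_const_smul _ _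
  have hcomm : laxV u y mu l x t * laxU u l x t - laxU u l x t * laxV u y mu l x t =
      (1 / (4 * (mu - l))) • (Mmat u y l x t * laxU u l x t - laxU u l x t * Mmat u y l x t) := by
    simp only [laxV, smul_mul_assoc, mul_smul_comm, smul_sub]
  rw [pdtM_laxU, hVx, hcomm, pdxM_Mmat hu hy, Mmat_mul_laxU_sub, ← smul_add]
  have hR : (1 / (4 * (mu - l))) • (!![-pdx (pdx y) x t, 2 * pdx y x t;
      2 * pdx u x t * y x t + 2 * (u x t - l) * pdx y x t - pdx (pdx (pdx y)) x t,
      pdx (pdx y) x t] + !![pdx (pdx y) x t, -(2 * pdx y x t);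
      2 * (u x t - l) * pdx y x t, -pdx (pdx y) x t]) =
      !![0, 0; pdx y x t - negKdV u y mu x t / (4 * (mu - l)), 0] := by
    ext i j
    fin_cases i <;> fin_cases j <;> simp [negKdV]
    field_simp
    ring
  rw [hR]
  constructor
  · intro h
    simpa using congrFun (congrFun h 1) 0
  · intro h
    rw [h]

end

lemma forall_ne_eq_sub_div_iff {a b e mu : ℝ} :
    (∀ l, l ≠ mu → a = b - e / (4 * (mu - l))) ↔ a = b ∧ e = 0 := by
  constructor
  · intro h
    have h1 := h (mu - 1) (by simp)
    have h2 := h (mu - 2) (by simp)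
    rw [sub_sub_cancel] at h1 h2
    constructor
    · linear_combination 2 * h2 - h1
    · linear_combination 8 * (h1 - h2)
  · rintro ⟨rfl, rfl⟩ l -
    simp

theorem statement6_general
    (J : Set ℝ)
    (u y : ℝ → ℝ → ℝ) (mu : ℝ)
    (hu : ContDiffOn ℝ (⊤ : ℕ∞) (uncurry u) (univ ×ˢ J))
    (hy : ContDiffOn ℝ (⊤ : ℕ∞) (uncurry y) (univ ×ˢ J))
    (U V : ℝ → ℝ → ℝ → Matrix (Fin 2) (Fin 2) ℝ)
    (hU : ∀ l x τ, U l x τ = !![0, 1; u x τ - l, 0])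
    (hV : ∀ l x τ, V l x τ = (1 / (4 * (mu - l))) • Mmat u y l x τ) :
    (∀ l : ℝ, l ≠ mu → ∀ x τ, τ ∈ J →
        pdtM (U l) x τ = pdxM (V l) x τ + (V l x τ * U l x τ - U l x τ * V l x τ))
    ↔ (∀ x τ, τ ∈ J →
        pdt u x τ = pdx y x τ
        ∧ pdx (pdx (pdx y)) x τ - 4*(u x τ - mu) * pdx y x τ - 2 * pdx u x τ * y x τ = 0) := by
  obtain rfl : U = laxU u := funext fun l => funext₂ (hU l)
  obtain rfl : V = laxV u y mu := funext fun l => funext₂ (hV l)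
  have key : ∀ l, l ≠ mu → ∀ x, ∀ τ ∈ J, _ ↔ _ := fun l hl x τ hτ =>
    zeroCurvature_iff (y := y) hl
      ((hu.contDiff_comp_prodMk_const hτ).differentiable (by simp) x)
      (contDiff_infty.mp (hy.contDiff_comp_prodMk_const hτ) 3)
  constructor
  · intro h x τ hτ
    exact forall_ne_eq_sub_div_iff.mp fun l hl => (key l hl x τ hτ).mp (h l hl x τ hτ)
  · intro h l hl x τ hτ
    exact (key l hl x τ hτ).mpr (forall_ne_eq_sub_div_iff.mpr (h x τ hτ) l hl)

/-- with `U = [[0,1],[u−λ,0]]` and `V = (1/(4(μ−λ)))M(y)`, the zero curvature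
equation `∂_τU = ∂ₓV + [V,U]` holds for every `λ ≠ μ` iff `∂_τu = ∂ₓy` and
`∂ₓ³y − 4(u−μ)∂ₓy − 2(∂ₓu)y = 0` (the negative symmetry of KdV). -/
theorem statement6
    (c d : ℝ) (J : Set ℝ) (hJ : J = Set.Ioo c d)
    (u y : ℝ → ℝ → ℝ) (mu : ℝ)
    (hu : ContDiffOn ℝ (⊤ : ℕ∞) (uncurry u) (univ ×ˢ J))
    (hy : ContDiffOn ℝ (⊤ : ℕ∞) (uncurry y) (univ ×ˢ J))
    (U V : ℝ → ℝ → ℝ → Matrix (Fin 2) (Fin 2) ℝ)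
    (hU : ∀ l x τ, U l x τ = !![0, 1; u x τ - l, 0])
    (hV : ∀ l x τ, V l x τ = (1 / (4 * (mu - l))) • Mmat u y l x τ) :
    (∀ l : ℝ, l ≠ mu → ∀ x τ, τ ∈ J →
        pdtM (U l) x τ = pdxM (V l) x τ + (V l x τ * U l x τ - U l x τ * V l x τ))
    ↔ (∀ x τ, τ ∈ J →
        pdt u x τ = pdx y x τ
        ∧ pdx (pdx (pdx y)) x τ - 4*(u x τ - mu) * pdx y x τ - 2 * pdx u x τ * y x τ = 0) :=
  statement6_general J u y mu hu hy U V hU hV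
end
end

section
/- Let u, f : ℝ × I → ℝ be smooth (I an open interval) and λ ∈ ℝ, and suppose ∂_x f = u − f² − λ and ∂_t f = ∂_x(∂_x u − 2(u + 2λ) f). Then f satisfies the modified KdV equation ∂_t f = ∂_x³ f − 6(f² + λ) ∂_x f on ℝ × I. -/
/-!
Fix a time `t` and write `g = f(·, t)`, `h = u(·, t)`. The first equation is the Miura map
`h = g' + g² + λ`, so `h' = g'' + 2 g g'`, and the flux in the second equation becomes a
function of `g` alone: `h' - 2(h + 2λ) g = g'' - 2 g³ - 6 λ g`. Differentiating once more gives
`g''' - 6(g² + λ) g'`, the right-hand side of mKdV.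
-/

open Set Function

noncomputable section

theorem ContDiffOn.contDiff_apply_right {𝕜 E F G : Type*} [NontriviallyNormedField 𝕜]
    [NormedAddCommGroup E] [NormedSpace 𝕜 E] [NormedAddCommGroup F] [NormedSpace 𝕜 F]
    [NormedAddCommGroup G] [NormedSpace 𝕜 G] {n : WithTop ℕ∞} {f : E → F → G} {s : Set F}
    (hf : ContDiffOn 𝕜 n (uncurry f) (univ ×ˢ s)) {t : F} (ht : t ∈ s) :
    ContDiff 𝕜 n (fun x => f x t) := by
  rw [← contDiffOn_univ]
  exact hf.comp (contDiff_id.prodMk contDiff_const).contDiffOn fun x _ => ⟨mem_univ x, ht⟩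

section Miura

variable {g h : ℝ → ℝ} {l : ℝ}

theorem deriv_eq_of_deriv_eq_sub_sq_sub (hg : Differentiable ℝ g)
    (hg' : Differentiable ℝ (deriv g)) (hgh : ∀ x, deriv g x = h x - g x ^ 2 - l) (x : ℝ) :
    deriv h x = deriv (deriv g) x + 2 * g x * deriv g x := by
  have hh : h = fun y => deriv g y + g y ^ 2 + l := funext fun y => by rw [hgh]; ring
  rw [hh]
  exact (((hg' x).hasDerivAt.add ((hg x).hasDerivAt.pow 2)).add_const l).deriv.trans (by ring)

theorem flux_eq_of_deriv_eq_sub_sq_sub (hg : Differentiable ℝ g)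
    (hg' : Differentiable ℝ (deriv g)) (hgh : ∀ x, deriv g x = h x - g x ^ 2 - l) (x : ℝ) :
    deriv h x - 2 * (h x + 2 * l) * g x = deriv (deriv g) x - 2 * g x ^ 3 - 6 * l * g x := by
  have hh : h x = deriv g x + g x ^ 2 + l := by rw [hgh]; ring
  rw [deriv_eq_of_deriv_eq_sub_sq_sub hg hg' hgh, hh]
  ring

theorem deriv_flux_eq_mkdv (hg : Differentiable ℝ g) (hg' : Differentiable ℝ (deriv g))
    (hg'' : Differentiable ℝ (deriv (deriv g))) (hgh : ∀ x, deriv g x = h x - g x ^ 2 - l)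
    (x : ℝ) :
    deriv (fun y => deriv h y - 2 * (h y + 2 * l) * g y) x
      = deriv (deriv (deriv g)) x - 6 * (g x ^ 2 + l) * deriv g x := by
  simp_rw [flux_eq_of_deriv_eq_sub_sq_sub hg hg' hgh]
  have hgx := (hg x).hasDerivAt
  refine ((((hg'' x).hasDerivAt.sub ((hgx.pow 3).const_mul 2)).sub
    (hgx.const_mul (6 * l))).deriv).trans ?_
  ring

end Miura

theorem statement11_general
    (I : Set ℝ)
    (u f : ℝ → ℝ → ℝ) (l : ℝ)
    (hf : ContDiffOn ℝ (⊤ : ℕ∞) (uncurry f) (univ ×ˢ I))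
    (hfx : ∀ x t, t ∈ I → pdx f x t = u x t - (f x t)^2 - l)
    (hft : ∀ x t, t ∈ I →
      pdt f x t = pdx (fun x' t' => pdx u x' t' - 2*(u x' t' + 2*l) * f x' t') x t) :
    ∀ x t, t ∈ I →
      pdt f x t = pdx (pdx (pdx f)) x t - 6*((f x t)^2 + l) * pdx f x t := by
  intro x t ht
  have hg : ContDiff ℝ (⊤ : ℕ∞) (fun x' => f x' t) := hf.contDiff_apply_right ht
  have hg' := (contDiff_infty_iff_deriv.mp hg).2
  have hg'' := (contDiff_infty_iff_deriv.mp hg').2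
  rw [hft x t ht]
  exact deriv_flux_eq_mkdv (hg.differentiable (by simp)) (hg'.differentiable (by simp))
    (hg''.differentiable (by simp)) (fun x' => hfx x' t ht) x

/-- if `∂ₓf = u − f² − λ` and `∂ₜf = ∂ₓ(∂ₓu − 2(u+2λ)f)`, then `f` satisfies
the modified KdV equation `∂ₜf = ∂ₓ³f − 6(f²+λ)∂ₓf` on `ℝ × I`. -/
theorem statement11
    (a b : ℝ) (I : Set ℝ) (hI : I = Set.Ioo a b)
    (u f : ℝ → ℝ → ℝ) (l : ℝ)
    (hu : ContDiffOn ℝ (⊤ : ℕ∞) (uncurry u) (univ ×ˢ I))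
    (hf : ContDiffOn ℝ (⊤ : ℕ∞) (uncurry f) (univ ×ˢ I))
    (hfx : ∀ x t, t ∈ I → pdx f x t = u x t - (f x t)^2 - l)
    (hft : ∀ x t, t ∈ I →
      pdt f x t = pdx (fun x' t' => pdx u x' t' - 2*(u x' t' + 2*l) * f x' t') x t) :
    ∀ x t, t ∈ I →
      pdt f x t = pdx (pdx (pdx f)) x t - 6*((f x t)^2 + l) * pdx f x t :=
  statement11_general I u f l hf hfx hft
end
end

section
/- Let n ≥ 1, λ_1,…,λ_n pairwise distinct reals, α_1,…,α_n reals, and let y_1,…,y_n, f_1,…,f_n : ℝ × I → ℝ be smooth (I an open interval, 0 ∉ I) with each y_j nowhere vanishing, satisfying the system (yfx), the system (yft), and the constraint (uy'). Then each y_j satisfies the degenerate Calogero–Degasperis equation ∂_t y_j = ∂_x³ y_j − 3(∂_x y_j)(∂_x² y_j)/y_j + 3(∂_x y_j)((∂_x y_j)² − α_j²)/(2 y_j²) − 6 λ_j ∂_x y_j on ℝ × I. -/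
open Set Function

noncomputable section

/-! At a fixed time `t`, (yfx) is a Riccati-type pair of ODEs for `Y = yⱼ(·, t)` and
`F = fⱼ(·, t)`. Differentiating `Y' = 2YF - α` twice gives `Y''` and `Y'''` in terms of
`Y, F, U, U'`, where `U = u(·, t)`; substituting `F = (Y' + α)/(2Y)` then turns the
Calogero–Degasperis expression in `Y` into `2U'Y - 2(U + 2λ)Y'`, which is `∂ₜyⱼ` by (yft). -/

section RiccatiPair

variable {Y F U : ℝ → ℝ} {α lam : ℝ}

theorem deriv_eq_of_riccati (hY : ∀ x, HasDerivAt Y (2 * Y x * F x - α) x) :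
    deriv Y = fun x => 2 * Y x * F x - α :=
  funext fun x => (hY x).deriv

theorem hasDerivAt_deriv_of_riccati (hY : ∀ x, HasDerivAt Y (2 * Y x * F x - α) x)
    (hF : ∀ x, HasDerivAt F (U x - F x ^ 2 - lam) x) (x : ℝ) :
    HasDerivAt (deriv Y)
      (2 * (2 * Y x * F x - α) * F x + 2 * Y x * (U x - F x ^ 2 - lam)) x := by
  rw [deriv_eq_of_riccati hY]
  exact (((hY x).const_mul 2).mul (hF x)).sub_const α

theorem hasDerivAt_deriv_deriv_of_riccati (hY : ∀ x, HasDerivAt Y (2 * Y x * F x - α) x)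
    (hF : ∀ x, HasDerivAt F (U x - F x ^ 2 - lam) x) {x U' : ℝ} (hU : HasDerivAt U U' x) :
    HasDerivAt (deriv (deriv Y))
      (2 * (2 * (2 * Y x * F x - α) * F x + 2 * Y x * (U x - F x ^ 2 - lam)) * F x
        + 4 * (2 * Y x * F x - α) * (U x - F x ^ 2 - lam)
        + 2 * Y x * (U' - 2 * F x * (U x - F x ^ 2 - lam))) x := by
  have hY'' : deriv (deriv Y)
      = fun x => 2 * (2 * Y x * F x - α) * F x + 2 * Y x * (U x - F x ^ 2 - lam) :=
    funext fun x => (hasDerivAt_deriv_of_riccati hY hF x).deriv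
  rw [hY'']
  have hYF := (((hY x).const_mul 2).mul (hF x)).sub_const α
  have hUF := (hU.sub ((hF x).pow 2)).sub_const lam
  refine (((hYF.const_mul 2).mul (hF x)).add (((hY x).const_mul 2).mul hUF)).congr_deriv ?_
  simp only [Pi.mul_apply, Pi.sub_apply, Pi.pow_apply, Nat.cast_ofNat]
  ring

theorem calogeroDegasperis_of_riccati (hY : ∀ x, HasDerivAt Y (2 * Y x * F x - α) x)
    (hF : ∀ x, HasDerivAt F (U x - F x ^ 2 - lam) x) {x : ℝ} (hU : DifferentiableAt ℝ U x)
    (hYx : Y x ≠ 0) :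
    deriv (deriv (deriv Y)) x
        - 3 * deriv Y x * deriv (deriv Y) x / Y x
        + 3 * deriv Y x * ((deriv Y x) ^ 2 - α ^ 2) / (2 * (Y x) ^ 2)
        - 6 * lam * deriv Y x
      = 2 * deriv U x * Y x - 2 * (U x + 2 * lam) * deriv Y x := by
  rw [(hasDerivAt_deriv_deriv_of_riccati hY hF hU.hasDerivAt).deriv,
    (hasDerivAt_deriv_of_riccati hY hF x).deriv, (hY x).deriv]
  field_simp
  ring

end RiccatiPair

theorem differentiableAt_slice_of_contDiffOn {g : ℝ → ℝ → ℝ} {s : Set ℝ} {m : WithTop ℕ∞}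
    (hg : ContDiffOn ℝ m (uncurry g) (univ ×ˢ s)) (hm : m ≠ 0) {t : ℝ} (ht : t ∈ s) (x : ℝ) :
    DifferentiableAt ℝ (fun x' => g x' t) x :=
  ((hg.differentiableOn hm).comp (differentiableOn_id.prodMk (differentiableOn_const t))
    fun _ _ => ⟨mem_univ _, ht⟩).differentiableAt Filter.univ_mem

theorem differentiableAt_ucon {n : ℕ} {y : Fin n → ℝ → ℝ → ℝ} {x t : ℝ}
    (hy : ∀ k, DifferentiableAt ℝ (fun x' => y k x' t) x) :
    DifferentiableAt ℝ (fun x' => ucon n y x' t) x :=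
  (differentiableAt_id.div_const _).add ((DifferentiableAt.fun_sum fun k _ => hy k).div_const _)

theorem statement12_general
    (n : ℕ)
    (lam alp : Fin n → ℝ)
    (I : Set ℝ)
    (y f : Fin n → ℝ → ℝ → ℝ)
    (hysmooth : ∀ j, ContDiffOn ℝ (⊤ : ℕ∞) (uncurry (y j)) (univ ×ˢ I))
    (hfsmooth : ∀ j, ContDiffOn ℝ (⊤ : ℕ∞) (uncurry (f j)) (univ ×ˢ I))
    (hyne : ∀ j x t, t ∈ I → y j x t ≠ 0)
    -- system (yfx)
    (hyfx : ∀ j x t, t ∈ I →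
      pdx (y j) x t = 2 * y j x t * f j x t - alp j
      ∧ pdx (f j) x t = ucon n y x t - (f j x t)^2 - lam j)
    -- system (yft)
    (hyft : ∀ j x t, t ∈ I →
      pdt (y j) x t
        = 2 * pdx (ucon n y) x t * y j x t
          - 2 * (ucon n y x t + 2*lam j) * pdx (y j) x t
      ∧ pdt (f j) x t
        = pdx (fun x' t' => pdx (ucon n y) x' t'
            - 2*(ucon n y x' t' + 2*lam j) * f j x' t') x t) :
    -- degenerate Calogero–Degasperis equations
    ∀ j, ∀ x t, t ∈ I →
      pdt (y j) x t
        = pdx (pdx (pdx (y j))) x t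
          - 3 * pdx (y j) x t * pdx (pdx (y j)) x t / y j x t
          + 3 * pdx (y j) x t * ((pdx (y j) x t)^2 - (alp j)^2) / (2 * (y j x t)^2)
          - 6 * lam j * pdx (y j) x t := by
  intro j x t ht
  have hdiff {g : ℝ → ℝ → ℝ} (hg : ContDiffOn ℝ (⊤ : ℕ∞) (uncurry g) (univ ×ˢ I)) :=
    differentiableAt_slice_of_contDiffOn hg (by simp) ht
  have hY (x' : ℝ) : HasDerivAt (fun x'' => y j x'' t) (2 * y j x' t * f j x' t - alp j) x' :=
    (hyfx j x' t ht).1 ▸ (hdiff (hysmooth j) x').hasDerivAt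
  have hF (x' : ℝ) :
      HasDerivAt (fun x'' => f j x'' t) (ucon n y x' t - f j x' t ^ 2 - lam j) x' :=
    (hyfx j x' t ht).2 ▸ (hdiff (hfsmooth j) x').hasDerivAt
  rw [(hyft j x t ht).1]
  exact (calogeroDegasperis_of_riccati hY hF
    (differentiableAt_ucon fun k => hdiff (hysmooth k) x) (hyne j x t ht)).symm

/-- for solutions of (yfx), (yft), (uy'), each `yⱼ` satisfies the degenerate
Calogero–Degasperis equation. -/
theorem statement12
    (n : ℕ) (hn : 1 ≤ n)
    (lam alp : Fin n → ℝ) (hlam : Function.Injective lam)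
    (a b : ℝ) (I : Set ℝ) (hI : I = Set.Ioo a b) (hI0 : (0:ℝ) ∉ I)
    (y f : Fin n → ℝ → ℝ → ℝ)
    (hysmooth : ∀ j, ContDiffOn ℝ (⊤ : ℕ∞) (uncurry (y j)) (univ ×ˢ I))
    (hfsmooth : ∀ j, ContDiffOn ℝ (⊤ : ℕ∞) (uncurry (f j)) (univ ×ˢ I))
    (hyne : ∀ j x t, t ∈ I → y j x t ≠ 0)
    -- system (yfx)
    (hyfx : ∀ j x t, t ∈ I →
      pdx (y j) x t = 2 * y j x t * f j x t - alp j
      ∧ pdx (f j) x t = ucon n y x t - (f j x t)^2 - lam j)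
    -- system (yft)
    (hyft : ∀ j x t, t ∈ I →
      pdt (y j) x t
        = 2 * pdx (ucon n y) x t * y j x t
          - 2 * (ucon n y x t + 2*lam j) * pdx (y j) x t
      ∧ pdt (f j) x t
        = pdx (fun x' t' => pdx (ucon n y) x' t'
            - 2*(ucon n y x' t' + 2*lam j) * f j x' t') x t) :
    -- degenerate Calogero–Degasperis equations
    ∀ j, ∀ x t, t ∈ I →
      pdt (y j) x t
        = pdx (pdx (pdx (y j))) x t
          - 3 * pdx (y j) x t * pdx (pdx (y j)) x t / y j x t
          + 3 * pdx (y j) x t * ((pdx (y j) x t)^2 - (alp j)^2) / (2 * (y j x t)^2)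
          - 6 * lam j * pdx (y j) x t :=
  statement12_general n lam alp I y f hysmooth hfsmooth hyne hyfx hyft
end
end
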